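/- arXiv:2206.03733 — 11 statements merged into one kernel-verified Lean document; each statement's English description precedes it below -/
import Mathlib

section
/- Let f ∈ ℤ[t] be a polynomial of degree d ≥ 2 with nonzero discriminant, which has at least one real root and at least one non-real root. Set c₂ = (2/δ)^{d−1} where δ is the minimal distance between two distinct roots, and c₁ = (1/c₂)·min{|Im(ξ)| : ξ a non-real root of f}. Then for every real t with |f(t)| < c₁, there exists a real root ξ of f with |t − ξ| ≤ c₂|f(t)|. -/
/-!
Write `f(t) = a₀ ∏ (t - ξ_j)` and let `ξ_j` be a root nearest to `t`. Every other root is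
`δ`-far from `ξ_j`, hence at least `δ/2` from `t`, so `|f(t)| ≥ |t - ξ_j| (δ/2)^(d-1)`, that is
`|t - ξ_j| ≤ c₂ |f(t)|`. Since `|Im ξ_j| ≤ |t - ξ_j|` for real `t`, a non-real nearest root would
force `|f(t)| ≥ m / c₂ = c₁`; so when `|f(t)| < c₁` the nearest root is real.
-/

open Polynomial

lemma half_le_norm_sub_of_norm_sub_le {E : Type*} [SeminormedAddCommGroup E] {x y z : E}
    {δ : ℝ} (hxy : δ ≤ ‖x - y‖) (hnear : ‖z - y‖ ≤ ‖z - x‖) : δ / 2 ≤ ‖z - x‖ := by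
  have := norm_sub_le_norm_sub_add_norm_sub x z y
  rw [norm_sub_rev x z] at this
  linarith

lemma exists_norm_sub_le_mul_prod_norm_sub {ι E : Type*} [Fintype ι] [Nonempty ι]
    [SeminormedAddCommGroup E] (ξ : ι → E) {δ : ℝ} (hδ : 0 < δ)
    (hsep : ∀ i j, i ≠ j → δ ≤ ‖ξ i - ξ j‖) (z : E) :
    ∃ j, ‖z - ξ j‖ ≤ (2 / δ) ^ (Fintype.card ι - 1) * ∏ i, ‖z - ξ i‖ := by
  classical
  obtain ⟨j, -, hnearest⟩ := Finset.exists_min_image Finset.univ (fun i => ‖z - ξ i‖)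
    Finset.univ_nonempty
  refine ⟨j, ?_⟩
  have hfar : (δ / 2) ^ (Fintype.card ι - 1) ≤ ∏ i ∈ Finset.univ.erase j, ‖z - ξ i‖ := by
    rw [← Finset.card_univ, ← Finset.card_erase_of_mem (Finset.mem_univ j),
      ← Finset.prod_const]
    exact Finset.prod_le_prod (fun _ _ => by positivity) fun i hi =>
      half_le_norm_sub_of_norm_sub_le (hsep i j (Finset.ne_of_mem_erase hi))
        (hnearest i (Finset.mem_univ i))
  rw [← Finset.mul_prod_erase _ _ (Finset.mem_univ j), ← inv_div, inv_pow,
    ← div_eq_inv_mul, le_div_iff₀ (by positivity)]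
  exact mul_le_mul_of_nonneg_left hfar (norm_nonneg _)

lemma aeval_eq_mul_prod_of_map_eq {R ι : Type*} [CommRing R] [Fintype ι] {f : ℤ[X]} {a : ℤ}
    {ξ : ι → R} (hfact : f.map (Int.castRingHom R) = C (a : R) * ∏ j, (X - C (ξ j))) (z : R) :
    aeval z f = a * ∏ j, (z - ξ j) := by
  rw [aeval_def, ← eval_map, algebraMap_int_eq, hfact]
  simp [eval_prod]

theorem stmt_2_general (f : Polynomial ℤ) (d : ℕ)
    (a₀ : ℤ) (ha₀ : 1 ≤ a₀)
    (ξ : Fin d → ℂ)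
    (hfact : f.map (Int.castRingHom ℂ) =
      Polynomial.C (a₀ : ℂ) * ∏ j : Fin d, (Polynomial.X - Polynomial.C (ξ j)))
    (hreal : ∃ j : Fin d, (ξ j).im = 0)
    (δ : ℝ) (hδpos : 0 < δ)
    (hδ : IsLeast {r : ℝ | ∃ i j : Fin d, i ≠ j ∧ r = ‖ξ i - ξ j‖} δ)
    (c₁ c₂ m : ℝ) (hc₂ : c₂ = (2 / δ) ^ (d - 1))
    (hm : IsLeast {r : ℝ | ∃ j : Fin d, (ξ j).im ≠ 0 ∧ r = |(ξ j).im|} m)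
    (hc₁ : c₁ = (1 / c₂) * m) :
    ∀ t : ℝ, ‖Polynomial.aeval (t : ℂ) f‖ < c₁ →
      ∃ j : Fin d, (ξ j).im = 0 ∧
        ‖(t : ℂ) - ξ j‖ ≤ c₂ * ‖Polynomial.aeval (t : ℂ) f‖ := by
  intro t ht
  have : Nonempty (Fin d) := hreal.nonempty
  obtain ⟨j, hj⟩ := exists_norm_sub_le_mul_prod_norm_sub ξ hδpos
    (fun i j hij => hδ.2 ⟨i, j, hij, rfl⟩) (t : ℂ)
  rw [Fintype.card_fin, ← hc₂] at hj
  have hc₂pos : 0 < c₂ := hc₂ ▸ by positivity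
  have hprod_le : ∏ i, ‖(t : ℂ) - ξ i‖ ≤ ‖aeval (t : ℂ) f‖ := by
    rw [aeval_eq_mul_prod_of_map_eq hfact, norm_mul, norm_prod, Complex.norm_intCast]
    exact le_mul_of_one_le_left (by positivity) (by exact_mod_cast ha₀.trans (le_abs_self a₀))
  have hnear : ‖(t : ℂ) - ξ j‖ ≤ c₂ * ‖aeval (t : ℂ) f‖ :=
    hj.trans (mul_le_mul_of_nonneg_left hprod_le hc₂pos.le)
  refine ⟨j, ?_, hnear⟩
  by_contra him
  have hm_le : m ≤ ‖(t : ℂ) - ξ j‖ := (hm.2 ⟨j, him, rfl⟩).trans <| by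
    simpa using Complex.abs_im_le_norm ((t : ℂ) - ξ j)
  have : c₁ ≤ ‖aeval (t : ℂ) f‖ := by
    rw [hc₁, one_div_mul_eq_div, div_le_iff₀' hc₂pos]
    exact hm_le.trans hnear
  linarith

/-- If f ∈ ℤ[t] has degree d ≥ 2, nonzero discriminant, at least one real root and
at least one non-real root, c₂ = (2/δ)^(d−1) with δ the minimal distance between
distinct roots, and c₁ = (1/c₂)·min{|Im ξ| : ξ non-real root}, then for every real t
with |f(t)| < c₁ there is a real root ξ with |t − ξ| ≤ c₂·|f(t)|. -/
theorem stmt_2 (f : Polynomial ℤ) (d : ℕ) (hd : 2 ≤ d) (hdeg : f.natDegree = d)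
    (a₀ : ℤ) (ha₀ : 1 ≤ a₀) (hlead : f.leadingCoeff = a₀)
    (ξ : Fin d → ℂ) (hinj : Function.Injective ξ)
    (hfact : f.map (Int.castRingHom ℂ) =
      Polynomial.C (a₀ : ℂ) * ∏ j : Fin d, (Polynomial.X - Polynomial.C (ξ j)))
    (hreal : ∃ j : Fin d, (ξ j).im = 0) (hnonreal : ∃ j : Fin d, (ξ j).im ≠ 0)
    (δ : ℝ) (hδpos : 0 < δ)
    (hδ : IsLeast {r : ℝ | ∃ i j : Fin d, i ≠ j ∧ r = ‖ξ i - ξ j‖} δ)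
    (c₁ c₂ m : ℝ) (hc₂ : c₂ = (2 / δ) ^ (d - 1))
    (hm : IsLeast {r : ℝ | ∃ j : Fin d, (ξ j).im ≠ 0 ∧ r = |(ξ j).im|} m)
    (hc₁ : c₁ = (1 / c₂) * m) :
    ∀ t : ℝ, ‖Polynomial.aeval (t : ℂ) f‖ < c₁ →
      ∃ j : Fin d, (ξ j).im = 0 ∧
        ‖(t : ℂ) - ξ j‖ ≤ c₂ * ‖Polynomial.aeval (t : ℂ) f‖ :=
  stmt_2_general f d a₀ ha₀ ξ hfact hreal δ hδpos hδ c₁ c₂ m hc₂ hm hc₁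
end

section
/- Let ξ, κ, s, Q₁, Q₂ be real numbers with s > 2, κ > 0, Q₂ > Q₁ ≥ 1, and assume additionally Q₂ ≤ 2Q₁. Then the number of rational numbers p/q (in lowest terms) with |ξ − p/q| ≤ κ/q^s and Q₁ ≤ q ≤ Q₂ is at most 8κ/Q₁^{s−2} + 1. -/
/-- Two distinct rationals differ by at least 1/(d·d'). -/
lemma rat_sep (r r' : ℚ) (h : r ≠ r') :
    1 / ((r.den : ℝ) * (r'.den : ℝ)) ≤ |(r : ℝ) - (r' : ℝ)| := by
  have hd : r - r' ≠ 0 := sub_ne_zero.mpr h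
  set q := r - r' with hq
  have hdvd : q.den ∣ r.den * r'.den := by
    have := Rat.add_den_dvd r (-r')
    simpa [hq, sub_eq_add_neg] using this
  have hle : (q.den : ℝ) ≤ (r.den : ℝ) * (r'.den : ℝ) := by
    exact_mod_cast Nat.le_of_dvd (by positivity) hdvd
  have hden : (0:ℝ) < (q.den : ℝ) := by exact_mod_cast q.pos
  have hnum : (1:ℝ) ≤ |(q.num : ℝ)| := by
    have : q.num ≠ 0 := Rat.num_ne_zero.mpr hd
    exact_mod_cast Int.one_le_abs this
  have hcast : ((r : ℝ) - (r' : ℝ)) = (q.num : ℝ) / (q.den : ℝ) := by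
    rw [hq, ← Rat.cast_sub, Rat.cast_def]
  rw [hcast, abs_div, abs_of_pos hden]
  rw [div_le_div_iff₀ (by positivity) hden]
  calc 1 * (q.den : ℝ) = (q.den : ℝ) := one_mul _
    _ ≤ (r.den : ℝ) * (r'.den : ℝ) := hle
    _ ≤ |(q.num : ℝ)| * ((r.den : ℝ) * (r'.den : ℝ)) := le_mul_of_one_le_left (by positivity) hnum

/-- Counting good rational approximations with denominator in [Q₁, Q₂] ⊆ [Q₁, 2Q₁]:
the number of rationals p/q with |ξ − p/q| ≤ κ/q^s and Q₁ ≤ q ≤ Q₂ is at most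
8κ/Q₁^{s−2} + 1. -/
theorem stmt_3 (ξ κ s Q₁ Q₂ : ℝ) (hs : 2 < s) (hκ : 0 < κ)
    (hQ₁ : 1 ≤ Q₁) (hQ₁₂ : Q₁ < Q₂) (hQ₂ : Q₂ ≤ 2 * Q₁) :
    {r : ℚ | |ξ - (r : ℝ)| ≤ κ / (r.den : ℝ) ^ s ∧ Q₁ ≤ (r.den : ℝ) ∧ (r.den : ℝ) ≤ Q₂}.Finite ∧
    (Nat.card {r : ℚ | |ξ - (r : ℝ)| ≤ κ / (r.den : ℝ) ^ s ∧
        Q₁ ≤ (r.den : ℝ) ∧ (r.den : ℝ) ≤ Q₂} : ℝ) ≤ 8 * κ / Q₁ ^ (s - 2) + 1 := by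
  set S := {r : ℚ | |ξ - (r : ℝ)| ≤ κ / (r.den : ℝ) ^ s ∧
      Q₁ ≤ (r.den : ℝ) ∧ (r.den : ℝ) ≤ Q₂} with hSdef
  have hQ₁0 : (0:ℝ) < Q₁ := by linarith
  set N : ℝ := 4 * Q₁ ^ 2 with hNdef
  have hN : 0 < N := by positivity
  set ε : ℝ := κ / Q₁ ^ s with hεdef
  have hQs : (0:ℝ) < Q₁ ^ s := Real.rpow_pos_of_pos hQ₁0 s
  have hε : 0 < ε := by positivity
  -- every element lies within ε of ξ
  have hmem : ∀ r : ℚ, r ∈ S → ξ - ε ≤ (r:ℝ) ∧ (r:ℝ) ≤ ξ + ε := by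
    intro r hr
    obtain ⟨h1, h2, h3⟩ := hr
    have hds : Q₁ ^ s ≤ (r.den : ℝ) ^ s :=
      Real.rpow_le_rpow hQ₁0.le h2 (by linarith)
    have hds0 : (0:ℝ) < (r.den : ℝ) ^ s := lt_of_lt_of_le hQs hds
    have h4 : κ / (r.den : ℝ) ^ s ≤ ε := by
      rw [hεdef]
      exact div_le_div_of_nonneg_left hκ.le hQs hds
    have := abs_le.mp (h1.trans h4)
    constructor <;> linarith
  -- separation
  have hsep : ∀ r ∈ S, ∀ r' ∈ S, r ≠ r' → 1 / N ≤ |(r:ℝ) - (r':ℝ)| := by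
    intro r hr r' hr' hne
    have h1 := rat_sep r r' hne
    have hd : (r.den : ℝ) * (r'.den : ℝ) ≤ N := by
      obtain ⟨-, h2, h3⟩ := hr
      obtain ⟨-, h2', h3'⟩ := hr'
      have hr0 : (0:ℝ) < (r.den : ℝ) := by linarith
      nlinarith
    calc 1 / N ≤ 1 / ((r.den : ℝ) * (r'.den : ℝ)) := by
          apply one_div_le_one_div_of_le _ hd
          have : (0:ℝ) < (r.den : ℝ) := by
            obtain ⟨-, h2, -⟩ := hr; linarith
          have : (0:ℝ) < (r'.den : ℝ) := by
            obtain ⟨-, h2', -⟩ := hr'; linarith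
          positivity
      _ ≤ _ := h1
  -- injectivity of the shifted floor map
  have hinj : ∀ c : ℝ, Set.InjOn (fun r : ℚ => ⌊((r:ℝ) - c) * N⌋) S := by
    intro c r hr r' hr' hfe
    by_contra hne
    have h1 := hsep r hr r' hr' hne
    simp only at hfe
    have ha := Int.floor_le (((r:ℝ) - c) * N)
    have hb := Int.lt_floor_add_one (((r:ℝ) - c) * N)
    have ha' := Int.floor_le (((r':ℝ) - c) * N)
    have hb' := Int.lt_floor_add_one (((r':ℝ) - c) * N)
    rw [hfe] at ha hb
    have habs : |(r:ℝ) - (r':ℝ)| * N < 1 := by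
      rw [← abs_of_pos hN, ← abs_mul]
      rw [abs_lt]
      constructor <;> nlinarith
    have : (1:ℝ) ≤ |(r:ℝ) - (r':ℝ)| * N := by
      rw [div_le_iff₀ hN] at h1
      linarith
    linarith
  -- finiteness
  have hfin : S.Finite := by
    apply Set.Finite.of_finite_image _ (hinj 0)
    apply Set.Finite.subset (Set.finite_Icc ⌊(ξ - ε - 0) * N⌋ ⌊(ξ + ε - 0) * N⌋)
    rintro _ ⟨r, hr, rfl⟩
    obtain ⟨h1, h2⟩ := hmem r hr
    exact ⟨Int.floor_mono (by nlinarith), Int.floor_mono (by nlinarith)⟩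
  refine ⟨hfin, ?_⟩
  rcases S.eq_empty_or_nonempty with hSe | hSne
  · have h0 : Nat.card S = 0 := by rw [hSe]; simp
    rw [h0]
    have : (0:ℝ) ≤ 8 * κ / Q₁ ^ (s - 2) := by positivity
    push_cast
    linarith
  · obtain ⟨m, hm, hmin⟩ := Set.exists_min_image S id hfin hSne
    simp only [id] at hmin
    set B : ℤ := ⌊2 * ε * N⌋ with hBdef
    have hB0 : 0 ≤ B := Int.floor_nonneg.mpr (by positivity)
    set f : ℚ → ℤ := fun r => ⌊((r:ℝ) - (m:ℝ)) * N⌋ with hfdef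
    have hsub : f '' S ⊆ ↑(Finset.Icc (0:ℤ) B) := by
      rintro _ ⟨r, hr, rfl⟩
      obtain ⟨h1, h2⟩ := hmem r hr
      obtain ⟨h1', h2'⟩ := hmem m hm
      have hmr : (m:ℝ) ≤ (r:ℝ) := by exact_mod_cast hmin r hr
      simp only [Finset.coe_Icc, Set.mem_Icc, hfdef]
      constructor
      · exact Int.floor_nonneg.mpr (by nlinarith)
      · exact Int.floor_mono (by nlinarith)
    have hcard : Nat.card S ≤ (Finset.Icc (0:ℤ) B).card := by
      rw [Nat.card_coe_set_eq, ← Set.ncard_image_of_injOn (hinj (m:ℝ))]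
      calc (f '' S).ncard ≤ (↑(Finset.Icc (0:ℤ) B) : Set ℤ).ncard :=
            Set.ncard_le_ncard hsub (Finset.Icc (0:ℤ) B).finite_toSet
        _ = (Finset.Icc (0:ℤ) B).card := Set.ncard_coe_finset _
    have hIcc : ((Finset.Icc (0:ℤ) B).card : ℝ) ≤ 2 * ε * N + 1 := by
      rw [Int.card_Icc]
      have h1 : ((B + 1 - 0).toNat : ℝ) = ((B:ℝ) + 1) := by
        rw [← Int.cast_natCast, Int.toNat_of_nonneg (by omega)]
        push_cast; ring
      rw [h1]
      have := Int.floor_le (2 * ε * N)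
      linarith
    have hkey : 2 * ε * N + 1 = 8 * κ / Q₁ ^ (s - 2) + 1 := by
      have h2 : Q₁ ^ (s - 2) = Q₁ ^ s / Q₁ ^ (2:ℝ) := Real.rpow_sub hQ₁0 s 2
      have h3 : Q₁ ^ (2:ℝ) = Q₁ ^ (2:ℕ) := by
        rw [show (2:ℝ) = ((2:ℕ):ℝ) by norm_num, Real.rpow_natCast]
      rw [hεdef, hNdef, h2, h3]
      have hQ2 : (0:ℝ) < Q₁ ^ (2:ℕ) := by positivity
      field_simp
      ring
    calc (Nat.card S : ℝ) ≤ ((Finset.Icc (0:ℤ) B).card : ℝ) := by exact_mod_cast hcard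
      _ ≤ 2 * ε * N + 1 := hIcc
      _ = _ := hkey
end

section
/- Let ξ, κ, s, Q₁, Q₂ be real numbers with s > 2, κ > 0, Q₂ > Q₁ ≥ 1. Then the number of rational numbers p/q with |ξ − p/q| ≤ κ/q^s and Q₁ ≤ q ≤ Q₂ is at most 2^{s+1}κ/((2^{s−2}−1)·Q₁^{s−2}) + ⌈log(Q₂/Q₁)/log 2⌉. -/
/-!
Rationals whose denominators lie in a dyadic block `[Q, 2Q]` are `1/(4Q²)`-separated, since
`|p/q - p'/q'| ≥ 1/(q q')`, and the good approximations among them lie in an interval of length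
`2κ/Q^s` around `ξ`; so a block contains at most `8κ/Q^(s-2) + 1` of them. Covering `[Q₁, Q₂]` by
`⌈log₂(Q₂/Q₁)⌉` dyadic blocks `[2^j Q₁, 2^(j+1) Q₁]` and summing the geometric series in
`2^(-(s-2))` gives the bound.
-/

open Set Real

theorem Rat.one_div_den_mul_den_le_abs_sub {r r' : ℚ} (h : r ≠ r') :
    1 / ((r.den : ℚ) * r'.den) ≤ |r - r'| := by
  have key : (r - r') * (r.den * r'.den) = ((r.num * r'.den - r'.num * r.den : ℤ) : ℚ) := by
    push_cast
    rw [← Rat.mul_den_eq_num r, ← Rat.mul_den_eq_num r']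
    ring
  have hne : r.num * r'.den - r'.num * r.den ≠ 0 := by
    intro h0
    rw [h0, Int.cast_zero, mul_eq_zero, sub_eq_zero] at key
    exact key.elim h (by positivity)
  rw [div_le_iff₀ (by positivity), ← abs_of_pos (by positivity : (0 : ℚ) < r.den * r'.den),
    ← abs_mul, key, ← Int.cast_abs]
  exact_mod_cast Int.one_le_abs hne

theorem injOn_floor_div_of_pairwise_le_abs_sub {S : Set ℝ} {δ : ℝ} (hδ : 0 < δ) (c : ℝ)
    (hsep : S.Pairwise fun x y => δ ≤ |x - y|) : S.InjOn fun x => ⌊(x - c) / δ⌋ := by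
  intro x hx y hy hxy
  by_contra hne
  have hlt := Int.abs_sub_lt_one_of_floor_eq_floor hxy
  rw [← sub_div, sub_sub_sub_cancel_right, abs_div, abs_of_pos hδ, div_lt_one hδ] at hlt
  exact (hsep hx hy hne).not_gt hlt

theorem finite_and_ncard_le_of_pairwise_le_abs_sub {S : Set ℝ} {a b δ : ℝ} (hab : a ≤ b)
    (hδ : 0 < δ) (hS : S ⊆ Icc a b) (hsep : S.Pairwise fun x y => δ ≤ |x - y|) :
    S.Finite ∧ (S.ncard : ℝ) ≤ (b - a) / δ + 1 := by
  set m := ⌊(b - a) / δ⌋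
  have hmaps : MapsTo (fun x => ⌊(x - a) / δ⌋) S (Icc 0 m) := fun x hx =>
    ⟨Int.floor_nonneg.mpr (div_nonneg (sub_nonneg.mpr (hS hx).1) hδ.le),
      Int.floor_mono (div_le_div_of_nonneg_right (sub_le_sub_right (hS hx).2 a) hδ.le)⟩
  have hinj := injOn_floor_div_of_pairwise_le_abs_sub hδ a hsep
  refine ⟨(finite_Icc 0 m).of_injOn hmaps hinj, ?_⟩
  have hm : 0 ≤ m := Int.floor_nonneg.mpr (div_nonneg (sub_nonneg.mpr hab) hδ.le)
  have hcard : (Icc 0 m).ncard = m.toNat + 1 := by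
    rw [← Finset.coe_Icc, ncard_coe_finset, Int.card_Icc]
    omega
  calc (S.ncard : ℝ) ≤ ((Icc 0 m).ncard : ℝ) :=
        Nat.cast_le.mpr (ncard_le_ncard_of_injOn _ hmaps hinj (finite_Icc 0 m))
    _ = m + 1 := by rw [hcard, Nat.cast_add_one, ← Int.cast_natCast, Int.toNat_of_nonneg hm]
    _ ≤ (b - a) / δ + 1 := by gcongr; exact Int.floor_le _

theorem sum_range_div_mul_two_pow_rpow_le {C Q t : ℝ} (hC : 0 ≤ C) (hQ : 0 < Q) (ht : 0 < t)
    (n : ℕ) : ∑ j ∈ Finset.range n, C / (Q * 2 ^ j) ^ t ≤ 2 ^ t * C / ((2 ^ t - 1) * Q ^ t) := by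
  have hterm : ∀ j : ℕ, C / (Q * 2 ^ j) ^ t = C / Q ^ t * ((2 : ℝ) ^ t)⁻¹ ^ j := fun j => by
    rw [mul_rpow hQ.le (by positivity), ← rpow_pow_comm zero_le_two, inv_pow]
    field_simp
  set a : ℝ := 2 ^ t
  have ha : 1 < a := one_lt_rpow one_lt_two ht
  have hgeom : ∑ j ∈ Finset.range n, a⁻¹ ^ j ≤ (1 - a⁻¹)⁻¹ := by
    simpa [← Finset.range_eq_Ico] using
      geom_sum_Ico_le_of_lt_one (m := 0) (n := n) (by positivity) (inv_lt_one_of_one_lt₀ ha)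
  calc ∑ j ∈ Finset.range n, C / (Q * 2 ^ j) ^ t
        = C / Q ^ t * ∑ j ∈ Finset.range n, a⁻¹ ^ j := by
        rw [Finset.mul_sum]; exact Finset.sum_congr rfl fun j _ => hterm j
    _ ≤ C / Q ^ t * (1 - a⁻¹)⁻¹ := by gcongr
    _ = a * C / ((a - 1) * Q ^ t) := by
        have : a - 1 ≠ 0 := by linarith
        field_simp

theorem Real.le_pow_natCeil_logb {b x : ℝ} (hb : 1 < b) (hx : 0 < x) :
    x ≤ b ^ ⌈logb b x⌉₊ :=
  calc x = b ^ logb b x := (rpow_logb (by linarith) hb.ne' hx).symm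
    _ ≤ b ^ (⌈logb b x⌉₊ : ℝ) := rpow_le_rpow_of_exponent_le hb.le (Nat.le_ceil _)
    _ = b ^ ⌈logb b x⌉₊ := rpow_natCast b _

theorem Icc_subset_biUnion_Icc_succ {α : Type*} [LinearOrder α] (b : ℕ → α) {n : ℕ}
    (hn : 1 ≤ n) : Icc (b 0) (b n) ⊆ ⋃ j ∈ Finset.range n, Icc (b j) (b (j + 1)) := by
  induction n, hn using Nat.le_induction with
  | base => exact subset_biUnion_of_mem (u := fun j => Icc (b j) (b (j + 1))) (by simp)
  | succ n hn ih =>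
    intro x hx
    rcases le_or_gt x (b n) with hle | hgt
    · exact biUnion_mono (by simp) (fun _ _ => le_rfl) (ih ⟨hx.1, hle⟩)
    · exact mem_biUnion (by simp) ⟨hgt.le, hx.2⟩

def goodApproximations (ξ κ s A B : ℝ) : Set ℚ :=
  {r : ℚ | |ξ - (r : ℝ)| ≤ κ / (r.den : ℝ) ^ s ∧ A ≤ (r.den : ℝ) ∧ (r.den : ℝ) ≤ B}

theorem finite_and_ncard_goodApproximations_le {ξ κ s Q : ℝ} (hQ : 0 < Q) (hκ : 0 ≤ κ)
    (hs : 0 ≤ s) :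
    (goodApproximations ξ κ s Q (2 * Q)).Finite ∧
      ((goodApproximations ξ κ s Q (2 * Q)).ncard : ℝ) ≤ 8 * κ / Q ^ (s - 2) + 1 := by
  set G := goodApproximations ξ κ s Q (2 * Q)
  have hQs : 0 < Q ^ s := rpow_pos_of_pos hQ s
  have hsub : ((↑) : ℚ → ℝ) '' G ⊆ Icc (ξ - κ / Q ^ s) (ξ + κ / Q ^ s) := by
    rintro _ ⟨r, ⟨happrox, hlo, -⟩, rfl⟩
    have hdist : κ / (r.den : ℝ) ^ s ≤ κ / Q ^ s := by gcongr
    constructor <;> linarith [abs_sub_le_iff.mp (happrox.trans hdist)]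
  have hsep : (((↑) : ℚ → ℝ) '' G).Pairwise fun x y => 1 / (4 * Q ^ 2) ≤ |x - y| := by
    rintro _ ⟨r, ⟨-, -, hr⟩, rfl⟩ _ ⟨r', ⟨-, -, hr'⟩, rfl⟩ hne
    have hdens : (r.den : ℝ) * r'.den ≤ 4 * Q ^ 2 := by nlinarith [r.den_pos, r'.den_pos]
    calc 1 / (4 * Q ^ 2) ≤ 1 / ((r.den : ℝ) * r'.den) := by gcongr
      _ ≤ |(r : ℝ) - r'| := by
        have h := (Rat.cast_le (K := ℝ)).mpr
          (Rat.one_div_den_mul_den_le_abs_sub (ne_of_apply_ne _ hne))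
        push_cast at h
        exact h
  obtain ⟨hfin, hcard⟩ := finite_and_ncard_le_of_pairwise_le_abs_sub
    (by linarith [div_nonneg hκ hQs.le]) (by positivity) hsub hsep
  have hlen : (ξ + κ / Q ^ s - (ξ - κ / Q ^ s)) / (1 / (4 * Q ^ 2)) = 8 * κ / Q ^ (s - 2) := by
    rw [rpow_sub hQ, rpow_two]
    field_simp
    ring
  rw [ncard_image_of_injective _ Rat.cast_injective, hlen] at hcard
  exact ⟨hfin.of_finite_image Rat.cast_injective.injOn, hcard⟩

theorem finite_and_ncard_biUnion_goodApproximations_le (ξ : ℝ) {κ s Q : ℝ} (hQ : 0 < Q)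
    (hκ : 0 ≤ κ) (hs : 2 < s) (n : ℕ) :
    (⋃ j ∈ Finset.range n, goodApproximations ξ κ s (Q * 2 ^ j) (2 * (Q * 2 ^ j))).Finite ∧
      ((⋃ j ∈ Finset.range n, goodApproximations ξ κ s (Q * 2 ^ j) (2 * (Q * 2 ^ j))).ncard : ℝ) ≤
        2 ^ (s + 1) * κ / ((2 ^ (s - 2) - 1) * Q ^ (s - 2)) + n := by
  have hblock := fun j : ℕ =>
    finite_and_ncard_goodApproximations_le (ξ := ξ) (by positivity : 0 < Q * 2 ^ j) hκ
      (by linarith : 0 ≤ s)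
  refine ⟨(Finset.range n).finite_toSet.biUnion fun j _ => (hblock j).1, ?_⟩
  have hexp : (2 : ℝ) ^ (s + 1) = 2 ^ (s - 2) * 8 := by
    rw [show s + 1 = s - 2 + 3 by ring, rpow_add two_pos]
    norm_num
  calc _ ≤ ((∑ j ∈ Finset.range n, (goodApproximations ξ κ s (Q * 2 ^ j) (2 * (Q * 2 ^ j))).ncard :
          ℕ) : ℝ) := Nat.cast_le.mpr (Finset.set_ncard_biUnion_le _ _)
    _ ≤ ∑ j ∈ Finset.range n, (8 * κ / (Q * 2 ^ j) ^ (s - 2) + 1) := by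
        push_cast; exact Finset.sum_le_sum fun j _ => (hblock j).2
    _ ≤ 2 ^ (s + 1) * κ / ((2 ^ (s - 2) - 1) * Q ^ (s - 2)) + n := by
        rw [Finset.sum_add_distrib, Finset.sum_const, Finset.card_range, nsmul_one, hexp,
          mul_assoc]
        gcongr
        exact sum_range_div_mul_two_pow_rpow_le (by positivity) hQ (by linarith) n

/-- Counting good rational approximations with denominator in [Q₁, Q₂]:
the number of rationals p/q with |ξ − p/q| ≤ κ/q^s and Q₁ ≤ q ≤ Q₂ is at most
2^{s+1}κ/((2^{s−2}−1)·Q₁^{s−2}) + ⌈log(Q₂/Q₁)/log 2⌉. -/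
theorem stmt_4 (ξ κ s Q₁ Q₂ : ℝ) (hs : 2 < s) (hκ : 0 < κ)
    (hQ₁ : 1 ≤ Q₁) (hQ₁₂ : Q₁ < Q₂) :
    {r : ℚ | |ξ - (r : ℝ)| ≤ κ / (r.den : ℝ) ^ s ∧ Q₁ ≤ (r.den : ℝ) ∧ (r.den : ℝ) ≤ Q₂}.Finite ∧
    (Nat.card {r : ℚ | |ξ - (r : ℝ)| ≤ κ / (r.den : ℝ) ^ s ∧
        Q₁ ≤ (r.den : ℝ) ∧ (r.den : ℝ) ≤ Q₂} : ℝ) ≤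
      2 ^ (s + 1) * κ / ((2 ^ (s - 2) - 1) * Q₁ ^ (s - 2)) +
        (⌈Real.log (Q₂ / Q₁) / Real.log 2⌉ : ℝ) := by
  change (goodApproximations ξ κ s Q₁ Q₂).Finite ∧
    (Nat.card (goodApproximations ξ κ s Q₁ Q₂) : ℝ) ≤ _
  have hQ₁0 : 0 < Q₁ := by linarith
  have hlogb : 0 < logb 2 (Q₂ / Q₁) := logb_pos one_lt_two ((one_lt_div hQ₁0).mpr hQ₁₂)
  set n := ⌈logb 2 (Q₂ / Q₁)⌉₊
  have hn : 1 ≤ n := Nat.one_le_iff_ne_zero.mpr (Nat.ceil_pos.mpr hlogb).ne'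
  have hQ₂ : Q₂ ≤ Q₁ * 2 ^ n := by
    rw [← div_le_iff₀' hQ₁0]
    exact le_pow_natCeil_logb one_lt_two (div_pos (by linarith) hQ₁0)
  have hcover : goodApproximations ξ κ s Q₁ Q₂ ⊆
      ⋃ j ∈ Finset.range n, goodApproximations ξ κ s (Q₁ * 2 ^ j) (2 * (Q₁ * 2 ^ j)) := by
    rintro r ⟨happrox, hlo, hhi⟩
    obtain ⟨j, hj, hjlo, hjhi⟩ := mem_iUnion₂.mp <|
      Icc_subset_biUnion_Icc_succ (fun j => Q₁ * 2 ^ j) hn ⟨by simpa using hlo, hhi.trans hQ₂⟩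
    exact mem_biUnion hj ⟨happrox, hjlo, by rw [pow_succ] at hjhi; linarith⟩
  obtain ⟨hfin, hcard⟩ := finite_and_ncard_biUnion_goodApproximations_le ξ hQ₁0 hκ.le hs n
  refine ⟨hfin.subset hcover, ?_⟩
  rw [Nat.card_coe_set_eq, log_div_log, ← natCast_ceil_eq_intCast_ceil hlogb.le]
  exact (Nat.cast_le.mpr (ncard_le_ncard hcover hfin)).trans hcard
end

section
/- Let d ≥ 4 be an even integer and let a, b, a', b' be positive integers. Then the binary forms aX^d + bY^d and a'X^d + b'Y^d are GL(2,ℚ)-isomorphic if and only if either both a/a' and b/b' are d-th powers of rational numbers, or both a/b' and b/a' are d-th powers of rational numbers. -/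
open Polynomial in
theorem lin_pow_coeff (p q : ℚ) (d k : ℕ) (hk : k ≤ d) :
    ((C p * X + C q) ^ d).coeff k = p ^ k * q ^ (d - k) * d.choose k := by
  rw [add_pow, finset_sum_coeff]
  have h : ∀ i, (C p * X) ^ i * C q ^ (d - i) * (d.choose i : ℚ[X]) =
      C (p ^ i * q ^ (d - i) * d.choose i) * X ^ i := by
    intro i
    simp only [C_mul, C_pow, map_natCast, mul_pow]
    ring
  simp only [h, coeff_C_mul, coeff_X_pow]
  rw [Finset.sum_eq_single k]
  · simp
  · intro i _ hik; simp [Ne.symm hik]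
  · intro hk'; simp at hk'; omega

/-- For even d ≥ 4 and positive integers a, b, a', b', the binary forms
aX^d + bY^d and a'X^d + b'Y^d are GL(2,ℚ)-isomorphic iff either a/a' and b/b'
are both d-th powers in ℚ, or a/b' and b/a' are both d-th powers in ℚ. -/
theorem stmt_5 (d : ℕ) (hd : 4 ≤ d) (hev : Even d) (a b a' b' : ℤ)
    (ha : 0 < a) (hb : 0 < b) (ha' : 0 < a') (hb' : 0 < b') :
    (∃ M : Matrix (Fin 2) (Fin 2) ℚ, M.det ≠ 0 ∧ ∀ x y : ℚ,
        (a : ℚ) * x ^ d + (b : ℚ) * y ^ d =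
          (a' : ℚ) * (M 0 0 * x + M 0 1 * y) ^ d + (b' : ℚ) * (M 1 0 * x + M 1 1 * y) ^ d) ↔
      ((∃ u : ℚ, (a : ℚ) / (a' : ℚ) = u ^ d) ∧ (∃ v : ℚ, (b : ℚ) / (b' : ℚ) = v ^ d)) ∨
      ((∃ u : ℚ, (a : ℚ) / (b' : ℚ) = u ^ d) ∧ (∃ v : ℚ, (b : ℚ) / (a' : ℚ) = v ^ d)) := by
  have ha0 : (a : ℚ) ≠ 0 := by positivity
  have hb0 : (b : ℚ) ≠ 0 := by positivity
  have ha'0 : (a' : ℚ) ≠ 0 := by positivity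
  have hb'0 : (b' : ℚ) ≠ 0 := by positivity
  have hd0 : d ≠ 0 := by omega
  constructor
  · rintro ⟨M, hdet, hM⟩
    rw [Matrix.det_fin_two] at hdet
    set p := M 0 0 with hp
    set q := M 0 1 with hq
    set r := M 1 0 with hr
    set s := M 1 1 with hs
    -- the polynomial identity
    open Polynomial in
    have hPzero : (C (a:ℚ) * X ^ d + C (b:ℚ)
        - (C (a':ℚ) * (C p * X + C q) ^ d + C (b':ℚ) * (C r * X + C s) ^ d)) = 0 := by
      apply Polynomial.funext
      intro x
      have hx := hM x 1
      simp only [mul_one, one_pow] at hx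
      simp [eval_pow, sub_eq_zero]
      linarith [hx]
    have key : ∀ k, k ≤ d →
        (a:ℚ) * (if d = k then 1 else 0) + (b:ℚ) * (if k = 0 then 1 else 0)
          = (a':ℚ) * (p ^ k * q ^ (d - k) * d.choose k)
            + (b':ℚ) * (r ^ k * s ^ (d - k) * d.choose k) := by
      intro k hk
      have h0 := congrArg (fun P => Polynomial.coeff P k) hPzero
      simp only [coeff_sub, coeff_add, coeff_C_mul, coeff_C, coeff_X_pow, coeff_zero,
        lin_pow_coeff p q d k hk, lin_pow_coeff r s d k hk] at h0
      split_ifs at h0 ⊢ <;> first | linarith [h0] | omega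
    obtain ⟨e, hde⟩ : ∃ e, d = e + 2 := ⟨d - 2, by omega⟩
    have he0 : e ≠ 0 := by omega
    -- k = d
    have Etop : (a:ℚ) = a' * p ^ d + b' * r ^ d := by
      have h1 := key d le_rfl
      simp [Nat.sub_self, hd0] at h1
      linarith [h1]
    -- k = 0
    have Ebot : (b:ℚ) = a' * q ^ d + b' * s ^ d := by
      have h1 := key 0 (by omega)
      simp [hd0, Ne.symm hd0] at h1
      linarith [h1]
    -- strip choose factor
    have strip : ∀ k, 0 < k → k < d →
        (a':ℚ) * (p ^ k * q ^ (d - k)) + (b':ℚ) * (r ^ k * s ^ (d - k)) = 0 := by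
      intro k hk0 hkd
      have hc : ((d.choose k : ℚ)) ≠ 0 := by
        exact_mod_cast (Nat.choose_pos hkd.le).ne'
      have hdk : d ≠ k := by omega
      have hk0' : k ≠ 0 := by omega
      have h1 := key k hkd.le
      simp only [hdk, hk0', if_false, mul_zero, zero_add, add_zero] at h1
      have h2 : ((a':ℚ) * (p ^ k * q ^ (d - k)) + (b':ℚ) * (r ^ k * s ^ (d - k)))
          * (d.choose k : ℚ) = 0 := by linear_combination -h1
      exact (mul_eq_zero.1 h2).resolve_right hc
    have E1 : (a':ℚ) * (p ^ (e+1) * q) + (b':ℚ) * (r ^ (e+1) * s) = 0 := by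
      have h1 := strip (e+1) (by omega) (by omega)
      rwa [(by omega : d - (e+1) = 1), pow_one, pow_one] at h1
    have E2 : (a':ℚ) * (p ^ e * q ^ 2) + (b':ℚ) * (r ^ e * s ^ 2) = 0 := by
      have h1 := strip e (by omega) (by omega)
      rwa [(by omega : d - e = 2)] at h1
    have E3 : (a':ℚ) * (p * q ^ (e+1)) + (b':ℚ) * (r * s ^ (e+1)) = 0 := by
      have h1 := strip 1 (by omega) (by omega)
      rwa [(by omega : d - 1 = e + 1), pow_one, pow_one] at h1
    rcases eq_or_ne q 0 with hq0 | hq0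
    · -- diagonal case
      have hps : p * s ≠ 0 := by
        intro h
        exact hdet (by rw [hq0, h, zero_mul, sub_zero])
      have hpne : p ≠ 0 := fun h => hps (by rw [h, zero_mul])
      have hsne : s ≠ 0 := fun h => hps (by rw [h, mul_zero])
      have hr0 : r = 0 := by
        rw [hq0, mul_zero, mul_zero, zero_add] at E1
        have h2 := (mul_eq_zero.1 E1).resolve_left hb'0
        have h3 := (mul_eq_zero.1 h2).resolve_right hsne
        exact pow_eq_zero_iff (by omega) |>.1 h3
      left
      constructor
      · refine ⟨p, ?_⟩
        rw [Etop, hr0, zero_pow hd0, mul_zero, add_zero, mul_comm,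
          mul_div_assoc, div_self ha'0, mul_one]
      · refine ⟨s, ?_⟩
        rw [Ebot, hq0, zero_pow hd0, mul_zero, zero_add, mul_comm,
          mul_div_assoc, div_self hb'0, mul_one]
    rcases eq_or_ne p 0 with hp0 | hp0
    · -- antidiagonal case
      have hqr : q * r ≠ 0 := by
        intro h
        exact hdet (by rw [hp0, zero_mul, h, zero_sub, neg_eq_zero])
      have hrne : r ≠ 0 := fun h => hqr (by rw [h, mul_zero])
      have hs0 : s = 0 := by
        rw [hp0, zero_mul, mul_zero] at E3
        rw [zero_add] at E3
        have h2 := (mul_eq_zero.1 E3).resolve_left hb'0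
        have h3 := (mul_eq_zero.1 h2).resolve_left hrne
        exact pow_eq_zero_iff (by omega) |>.1 h3
      right
      constructor
      · refine ⟨r, ?_⟩
        rw [Etop, hp0, zero_pow hd0, mul_zero, zero_add, mul_comm,
          mul_div_assoc, div_self hb'0, mul_one]
      · refine ⟨q, ?_⟩
        rw [Ebot, hs0, zero_pow hd0, mul_zero, add_zero, mul_comm,
          mul_div_assoc, div_self ha'0, mul_one]
    · -- impossible case: p ≠ 0, q ≠ 0
      exfalso
      have hrne : r ≠ 0 := by
        intro h
        rw [h, zero_pow (by omega : e + 1 ≠ 0), zero_mul, mul_zero, add_zero] at E1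
        rcases mul_eq_zero.1 E1 with h3 | h3
        · exact ha'0 h3
        rcases mul_eq_zero.1 h3 with h4 | h4
        · exact hp0 (pow_eq_zero_iff (by omega) |>.1 h4)
        · exact hq0 h4
      have hsne : s ≠ 0 := by
        intro h
        rw [h, zero_pow (by omega : e + 1 ≠ 0), mul_zero, mul_zero, add_zero] at E3
        rcases mul_eq_zero.1 E3 with h3 | h3
        · exact ha'0 h3
        rcases mul_eq_zero.1 h3 with h4 | h4
        · exact hp0 h4
        · exact hq0 (pow_eq_zero_iff (by omega) |>.1 h4)
      have hkey : ((a':ℚ) * p ^ e * q) * (p * s - q * r) = 0 := by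
        linear_combination s * E1 - r * E2
      rcases mul_eq_zero.1 hkey with h3 | h3
      · rcases mul_eq_zero.1 h3 with h4 | h4
        · rcases mul_eq_zero.1 h4 with h5 | h5
          · exact ha'0 h5
          · exact hp0 (pow_eq_zero_iff he0 |>.1 h5)
        · exact hq0 h4
      · exact hdet h3
  · rintro (⟨⟨u, hu⟩, ⟨v, hv⟩⟩ | ⟨⟨u, hu⟩, ⟨v, hv⟩⟩)
    · have hu0 : u ≠ 0 := by
        intro h; rw [h, zero_pow hd0] at hu
        exact ha0 ((div_eq_zero_iff.1 hu).resolve_right ha'0)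
      have hv0 : v ≠ 0 := by
        intro h; rw [h, zero_pow hd0] at hv
        exact hb0 ((div_eq_zero_iff.1 hv).resolve_right hb'0)
      have ha2 : (a:ℚ) = a' * u ^ d := by
        field_simp at hu; linear_combination hu
      have hb2 : (b:ℚ) = b' * v ^ d := by
        field_simp at hv; linear_combination hv
      refine ⟨!![u, 0; 0, v], ?_, ?_⟩
      · rw [Matrix.det_fin_two_of]; simpa using mul_ne_zero hu0 hv0
      · intro x y
        have e00 : (!![u, 0; 0, v] : Matrix (Fin 2) (Fin 2) ℚ) 0 0 = u := by simp
        have e01 : (!![u, 0; 0, v] : Matrix (Fin 2) (Fin 2) ℚ) 0 1 = 0 := by simp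
        have e10 : (!![u, 0; 0, v] : Matrix (Fin 2) (Fin 2) ℚ) 1 0 = 0 := by simp
        have e11 : (!![u, 0; 0, v] : Matrix (Fin 2) (Fin 2) ℚ) 1 1 = v := by simp
        rw [e00, e01, e10, e11, ha2, hb2]
        ring
    · have hu0 : u ≠ 0 := by
        intro h; rw [h, zero_pow hd0] at hu
        exact ha0 ((div_eq_zero_iff.1 hu).resolve_right hb'0)
      have hv0 : v ≠ 0 := by
        intro h; rw [h, zero_pow hd0] at hv
        exact hb0 ((div_eq_zero_iff.1 hv).resolve_right ha'0)
      have ha2 : (a:ℚ) = b' * u ^ d := by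
        field_simp at hu; linear_combination hu
      have hb2 : (b:ℚ) = a' * v ^ d := by
        field_simp at hv; linear_combination hv
      refine ⟨!![0, v; u, 0], ?_, ?_⟩
      · rw [Matrix.det_fin_two_of]
        simp only [zero_mul, zero_sub, neg_ne_zero]
        exact mul_ne_zero hv0 hu0
      · intro x y
        have e00 : (!![0, v; u, 0] : Matrix (Fin 2) (Fin 2) ℚ) 0 0 = 0 := by simp
        have e01 : (!![0, v; u, 0] : Matrix (Fin 2) (Fin 2) ℚ) 0 1 = v := by simp
        have e10 : (!![0, v; u, 0] : Matrix (Fin 2) (Fin 2) ℚ) 1 0 = u := by simp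
        have e11 : (!![0, v; u, 0] : Matrix (Fin 2) (Fin 2) ℚ) 1 1 = 0 := by simp
        rw [e00, e01, e10, e11, ha2, hb2]
        ring
end

section
/- Let d ≥ 4 be even and let a, b be positive integers. If (a₁ a₂; a₃ a₄) ∈ GL(2,ℚ) satisfies a(a₁X + a₂Y)^d + b(a₃X + a₄Y)^d = a'X^d + b'Y^d identically for some positive integers a', b', then a₁a₂ = 0 (equivalently, the matrix is diagonal or antidiagonal). -/
/-!
Setting `y = 1` turns the identity into one between polynomials in `x`. As `d > 2`, the
coefficient of `x ^ 2` vanishes on the right, while on the left it is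
`C(d, 2) (a a₁² a₂^(d-2) + b a₃² a₄^(d-2))`. Both summands are nonnegative because `d - 2` is even,
so the first one vanishes, and `a > 0` forces `a₁ a₂ = 0`.
-/

open Polynomial

theorem coeff_C_mul_X_add_C_pow {R : Type*} [CommSemiring R] (v u : R) (n k : ℕ) :
    ((C v * X + C u) ^ n).coeff k = n.choose k * v ^ k * u ^ (n - k) := by
  have hterm (m : ℕ) : (C v * X) ^ m * C u ^ (n - m) * (n.choose m : R[X]) =
      C (n.choose m * v ^ m * u ^ (n - m)) * X ^ m := by
    simp only [map_mul, map_pow, map_natCast]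
    ring
  simp_rw [add_pow, finsetSum_coeff, hterm, coeff_C_mul_X_pow]
  rw [Finset.sum_ite_eq]
  split_ifs with hk
  · rfl
  · simp [Nat.choose_eq_zero_of_lt (by simpa using hk : n < k)]

theorem mul_sq_mul_pow_add_mul_sq_mul_pow_eq_zero {K : Type*} [CommRing K] [IsDomain K]
    [CharZero K] {a b a' b' p q r s : K} {d : ℕ} (hd : 2 < d)
    (h : ∀ t, a * (p * t + q) ^ d + b * (r * t + s) ^ d = a' * t ^ d + b') :
    a * p ^ 2 * q ^ (d - 2) + b * r ^ 2 * s ^ (d - 2) = 0 := by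
  have hpoly : C a * (C p * X + C q) ^ d + C b * (C r * X + C s) ^ d = C a' * X ^ d + C b' :=
    Polynomial.funext fun t => by simpa using h t
  have hcoeff := congrArg (coeff · 2) hpoly
  simp only [coeff_add, coeff_C_mul, coeff_C_mul_X_add_C_pow, coeff_X_pow, coeff_C,
    if_neg hd.ne, if_neg two_ne_zero, mul_zero, add_zero] at hcoeff
  have hchoose : (d.choose 2 : K) ≠ 0 := Nat.cast_ne_zero.mpr (Nat.choose_pos hd.le).ne'
  apply mul_left_cancel₀ hchoose
  linear_combination hcoeff

theorem mul_eq_zero_of_mul_sq_mul_pow_add_mul_sq_mul_pow_eq_zero {K : Type*} [CommRing K]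
    [LinearOrder K] [IsStrictOrderedRing K] {a b p q r s : K} {n : ℕ} (ha : 0 < a) (hb : 0 ≤ b)
    (hn : Even n) (hn0 : n ≠ 0) (h : a * p ^ 2 * q ^ n + b * r ^ 2 * s ^ n = 0) :
    p * q = 0 := by
  have hq := hn.pow_nonneg q
  have hs := hn.pow_nonneg s
  have hfirst : a * p ^ 2 * q ^ n = 0 := by
    have : 0 ≤ a * p ^ 2 * q ^ n := by positivity
    have : 0 ≤ b * r ^ 2 * s ^ n := by positivity
    linarith
  simpa [ha.ne', hn0] using hfirst

theorem stmt_6_general (d : ℕ) (hd : 4 ≤ d) (hev : Even d) (a b a' b' : ℤ)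
    (ha : 0 < a) (hb : 0 < b)
    (M : Matrix (Fin 2) (Fin 2) ℚ)
    (h : ∀ x y : ℚ,
      (a : ℚ) * (M 0 0 * x + M 0 1 * y) ^ d + (b : ℚ) * (M 1 0 * x + M 1 1 * y) ^ d =
        (a' : ℚ) * x ^ d + (b' : ℚ) * y ^ d) :
    M 0 0 * M 0 1 = 0 := by
  have hcoeff := mul_sq_mul_pow_add_mul_sq_mul_pow_eq_zero (d := d) (by omega) fun t => by
    simpa using h t 1
  exact mul_eq_zero_of_mul_sq_mul_pow_add_mul_sq_mul_pow_eq_zero (by exact_mod_cast ha)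
    (by exact_mod_cast hb.le) (hev.tsub even_two) (by omega) hcoeff

/-- For even d ≥ 4 and positive integers a, b: if a matrix in GL(2,ℚ) transforms
aX^d + bY^d into a'X^d + b'Y^d (a', b' positive), then a₁a₂ = 0, i.e. the matrix
is diagonal or antidiagonal. -/
theorem stmt_6 (d : ℕ) (hd : 4 ≤ d) (hev : Even d) (a b a' b' : ℤ)
    (ha : 0 < a) (hb : 0 < b) (ha' : 0 < a') (hb' : 0 < b')
    (M : Matrix (Fin 2) (Fin 2) ℚ) (hdet : M.det ≠ 0)
    (h : ∀ x y : ℚ,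
      (a : ℚ) * (M 0 0 * x + M 0 1 * y) ^ d + (b : ℚ) * (M 1 0 * x + M 1 1 * y) ^ d =
        (a' : ℚ) * x ^ d + (b' : ℚ) * y ^ d) :
    M 0 0 * M 0 1 = 0 :=
  stmt_6_general d hd hev a b a' b' ha hb M h
end

section
/- Let d ≥ 2 and let μ₁ < μ₂ < ⋯ < μ_{d+1} be positive squarefree integers, and let 1 ≤ ν ≤ d+1. Then the group of matrices γ ∈ GL(2,ℚ) satisfying Q∘γ = Q, where Q(X,Y) = ∏_{1≤n≤d+1, n≠ν}(X² + μ_n Y²), is exactly the Klein group {(±1 0; 0 ±1)} of order 4. -/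
/-!
Put y = 1; the resulting identity between polynomials over ℚ then holds at every complex z.
At z = i√μₖ the right side vanishes, so some factor (a z + b)² + μₘ (c z + e)² vanishes there.
Its two rational coordinates in the basis 1, z vanish, and since μₘ, μₖ are squarefree this
forces μₘ = μₖ. The resulting relations, for two distinct values μₖ, kill the off-diagonal
entries and give a² = e²; evaluating the identity at (1, 0) then gives a² = 1.
-/

open Finset

theorem Squarefree.eq_of_mul_sq_eq {m n : ℤ} (hm : Squarefree m) (hn : Squarefree n) {r : ℚ}
    (h : (m : ℚ) * r ^ 2 = n) : m = n := by
  have hint : m * r.num ^ 2 = n * (r.den : ℤ) ^ 2 := by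
    have hq : (m : ℚ) * r.num ^ 2 = n * r.den ^ 2 := by
      rw [← Rat.mul_den_eq_num]; linear_combination (r.den : ℚ) ^ 2 * h
    exact_mod_cast hq
  have hcop : IsCoprime r.num (r.den : ℤ) := Int.isCoprime_iff_gcd_eq_one.mpr r.reduced
  have hnum : IsUnit r.num := hn _ <| by
    simpa only [sq] using hcop.pow.dvd_of_dvd_mul_right
      (⟨m, by linear_combination -hint⟩ : r.num ^ 2 ∣ n * (r.den : ℤ) ^ 2)
  have hden : IsUnit (r.den : ℤ) := hm _ <| by
    simpa only [sq] using hcop.symm.pow.dvd_of_dvd_mul_right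
      (⟨n, by linear_combination hint⟩ : (r.den : ℤ) ^ 2 ∣ m * r.num ^ 2)
  simpa [Int.isUnit_sq hnum, Int.isUnit_sq hden] using hint

theorem eq_zero_of_add_mul_eq_zero_of_sq_eq_neg {A B q : ℚ} (hq : 0 < q) {z : ℂ}
    (hz : z ^ 2 = -q) (h : A + B * z = 0) : A = 0 ∧ B = 0 := by
  have hnorm : A ^ 2 + B ^ 2 * q = 0 := by
    exact_mod_cast (by linear_combination (A - B * z) * h + B ^ 2 * hz :
      (A : ℂ) ^ 2 + B ^ 2 * q = 0)
  have hA : A ^ 2 = 0 := by nlinarith [sq_nonneg A, mul_nonneg (sq_nonneg B) hq.le]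
  have hB : B ^ 2 * q = 0 := by linarith
  exact ⟨pow_eq_zero_iff two_ne_zero |>.mp hA,
    pow_eq_zero_iff two_ne_zero |>.mp ((mul_eq_zero.mp hB).resolve_right hq.ne')⟩

theorem coeffs_eq_zero_of_sq_add_mul_sq_eq_zero {a b c e p q : ℚ} (hq : 0 < q) {z : ℂ}
    (hz : z ^ 2 = -q) (h : (a * z + b) ^ 2 + p * (c * z + e) ^ 2 = 0) :
    a * b + p * c * e = 0 ∧ b ^ 2 + p * e ^ 2 = q * (a ^ 2 + p * c ^ 2) := by
  obtain ⟨hA, hB⟩ := eq_zero_of_add_mul_eq_zero_of_sq_eq_neg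
    (A := b ^ 2 + p * e ^ 2 - q * (a ^ 2 + p * c ^ 2)) (B := 2 * (a * b + p * c * e)) hq hz
    (by push_cast; linear_combination h - (a ^ 2 + p * c ^ 2) * hz)
  exact ⟨by linarith, by linarith⟩

theorem eq_of_coeffs_eq_zero {p q : ℤ} (hp : 0 < p) (hpsf : Squarefree p)
    (hqsf : Squarefree q) {a b c e : ℚ} (hac : a ≠ 0 ∨ c ≠ 0) (hB : a * b + p * c * e = 0)
    (hA : b ^ 2 + p * e ^ 2 = q * (a ^ 2 + p * c ^ 2)) : p = q := by
  have hpQ : (0 : ℚ) < p := by exact_mod_cast hp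
  have hpos : 0 < a ^ 2 + p * c ^ 2 := by
    rcases hac with ha | hc <;> positivity
  have hpe : p * e ^ 2 = q * a ^ 2 := by
    have : (p * e ^ 2 - q * a ^ 2) * (a ^ 2 + p * c ^ 2) = 0 := by
      linear_combination a ^ 2 * hA + (p * c * e - a * b) * hB
    linarith [(mul_eq_zero.mp this).resolve_right hpos.ne']
  rcases eq_or_ne a 0 with rfl | ha
  · have hc : c ≠ 0 := hac.resolve_left (not_not.mpr rfl)
    obtain rfl : e = 0 := by simpa [hpQ.ne'] using hpe
    refine hpsf.eq_of_mul_sq_eq hqsf (r := b / (p * c)) ?_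
    field_simp
    linear_combination hA
  · exact hpsf.eq_of_mul_sq_eq hqsf (r := e / a) (by field_simp; linear_combination hpe)

theorem off_diag_eq_zero_of_coeffs_eq_zero {p q a b c e : ℚ} (hp : 0 < p) (hq : 0 < q)
    (hpq : p ≠ q) (hBp : a * b + p * c * e = 0) (hBq : a * b + q * c * e = 0)
    (hAp : b ^ 2 + p * e ^ 2 = p * (a ^ 2 + p * c ^ 2))
    (hAq : b ^ 2 + q * e ^ 2 = q * (a ^ 2 + q * c ^ 2)) :
    b = 0 ∧ c = 0 ∧ e ^ 2 = a ^ 2 := by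
  have hpq' : p - q ≠ 0 := sub_ne_zero.mpr hpq
  have hce : c * e = 0 :=
    (mul_eq_zero.mp (by linear_combination hBp - hBq : (p - q) * (c * e) = 0)).resolve_left hpq'
  have hc : c = 0 := by
    refine (mul_eq_zero.mp hce).elim id fun he => ?_
    subst he
    have h0 : a ^ 2 + (p + q) * c ^ 2 = 0 := (mul_eq_zero.mp
      (by linear_combination hAq - hAp : (p - q) * (a ^ 2 + (p + q) * c ^ 2) = 0)).resolve_left hpq'
    have hc2 : (p + q) * c ^ 2 = 0 := by
      nlinarith [sq_nonneg a, mul_nonneg (add_pos hp hq).le (sq_nonneg c)]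
    exact pow_eq_zero_iff two_ne_zero |>.mp ((mul_eq_zero.mp hc2).resolve_left (by positivity))
  subst hc
  have hea : e ^ 2 = a ^ 2 := by
    have := (mul_eq_zero.mp
      (by linear_combination hAp - hAq : (p - q) * (e ^ 2 - a ^ 2) = 0)).resolve_left hpq'
    linarith
  exact ⟨pow_eq_zero_iff two_ne_zero |>.mp (by linear_combination hAp - p * hea), rfl, hea⟩

theorem prod_eq_prod_complex_of_forall_rat {ι : Type*} (S : Finset ι) (r : ι → ℚ) {a b c e : ℚ}
    (h : ∀ x : ℚ, ∏ n ∈ S, ((a * x + b) ^ 2 + r n * (c * x + e) ^ 2) = ∏ n ∈ S, (x ^ 2 + r n))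
    (z : ℂ) :
    ∏ n ∈ S, ((a * z + b) ^ 2 + r n * (c * z + e) ^ 2) = ∏ n ∈ S, (z ^ 2 + r n) := by
  open Polynomial in
  have hpoly : ∏ n ∈ S, ((C a * X + C b) ^ 2 + C (r n) * (C c * X + C e) ^ 2) =
      ∏ n ∈ S, (X ^ 2 + C (r n)) :=
    Polynomial.funext fun x => by simpa [eval_prod] using h x
  simpa [map_prod] using congrArg (Polynomial.aeval z) hpoly

theorem coeffs_eq_zero_of_forall_rat {ι : Type*} {S : Finset ι} {μ : ι → ℤ} (hpos : ∀ n, 0 < μ n)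
    (hsf : ∀ n, Squarefree (μ n)) {a b c e : ℚ} (hac : a ≠ 0 ∨ c ≠ 0)
    (h : ∀ x : ℚ, ∏ n ∈ S, ((a * x + b) ^ 2 + (μ n : ℚ) * (c * x + e) ^ 2) =
      ∏ n ∈ S, (x ^ 2 + (μ n : ℚ)))
    {k : ι} (hk : k ∈ S) :
    a * b + μ k * c * e = 0 ∧ b ^ 2 + μ k * e ^ 2 = μ k * (a ^ 2 + μ k * c ^ 2) := by
  have hq : (0 : ℚ) < μ k := by exact_mod_cast hpos k
  set z : ℂ := Real.sqrt (μ k) * Complex.I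
  have hz : z ^ 2 = -((μ k : ℚ) : ℂ) := by
    have hsqrt : Real.sqrt (μ k) ^ 2 = μ k := Real.sq_sqrt (by exact_mod_cast (hpos k).le)
    simp [z, mul_pow, ← Complex.ofReal_pow, hsqrt]
  have hzero : ∏ n ∈ S, ((a * z + b) ^ 2 + ((μ n : ℚ) : ℂ) * (c * z + e) ^ 2) = 0 := by
    rw [prod_eq_prod_complex_of_forall_rat S _ h z]
    exact prod_eq_zero hk (by rw [hz]; ring)
  obtain ⟨m, -, hm⟩ := prod_eq_zero_iff.mp hzero
  obtain ⟨hB, hA⟩ := coeffs_eq_zero_of_sq_add_mul_sq_eq_zero hq hz hm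
  have hmk := eq_of_coeffs_eq_zero (hpos m) (hsf m) (hsf k) hac hB hA
  rw [hmk] at hB hA
  exact ⟨hB, hA⟩

/-- For d ≥ 2 and positive squarefree strictly increasing μ₁ < ⋯ < μ_{d+1},
the automorphisms in GL(2,ℚ) of Q(X,Y) = ∏_{n≠ν}(X² + μ_n Y²) are exactly the
four matrices (±1 0; 0 ±1) (Klein group of order 4). -/
theorem stmt_8 (d : ℕ) (hd : 2 ≤ d) (μ : Fin (d + 1) → ℤ)
    (hμpos : ∀ n, 0 < μ n) (hμsf : ∀ n, Squarefree (μ n)) (hμmono : StrictMono μ)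
    (ν : Fin (d + 1)) (M : Matrix (Fin 2) (Fin 2) ℚ) (hdet : M.det ≠ 0) :
    (∀ x y : ℚ,
        ∏ n ∈ Finset.univ.erase ν,
            ((M 0 0 * x + M 0 1 * y) ^ 2 + (μ n : ℚ) * (M 1 0 * x + M 1 1 * y) ^ 2) =
          ∏ n ∈ Finset.univ.erase ν, (x ^ 2 + (μ n : ℚ) * y ^ 2)) ↔
      (M = !![1, 0; 0, 1] ∨ M = !![-1, 0; 0, -1] ∨ M = !![1, 0; 0, -1] ∨ M = !![-1, 0; 0, 1]) := by
  refine ⟨fun h => ?_, by rintro (rfl | rfl | rfl | rfl) x y <;> simp⟩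
  have hcard : (univ.erase ν).card = d := by simp
  have hac : M 0 0 ≠ 0 ∨ M 1 0 ≠ 0 := by
    by_contra! h0
    exact hdet (by simp [Matrix.det_fin_two, h0.1, h0.2])
  obtain ⟨n₁, hn₁, n₂, hn₂, hne⟩ := one_lt_card.mp (by omega : 1 < (univ.erase ν).card)
  have h1 (x : ℚ) := by simpa using h x 1
  obtain ⟨hB₁, hA₁⟩ := coeffs_eq_zero_of_forall_rat hμpos hμsf hac h1 hn₁
  obtain ⟨hB₂, hA₂⟩ := coeffs_eq_zero_of_forall_rat hμpos hμsf hac h1 hn₂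
  obtain ⟨hb, hc, hea⟩ := off_diag_eq_zero_of_coeffs_eq_zero (by exact_mod_cast hμpos n₁)
    (by exact_mod_cast hμpos n₂) (by exact_mod_cast hμmono.injective.ne hne) hB₁ hB₂ hA₁ hA₂
  have ha : M 0 0 ^ 2 = 1 := by
    have h10 : (M 0 0 ^ 2) ^ d = 1 := by simpa [hc, hcard] using h 1 0
    exact (pow_eq_one_iff_of_nonneg (sq_nonneg _) (by omega)).mp h10
  rw [Matrix.eta_fin_two M, hb, hc]
  have he : M 1 1 ^ 2 = 1 := hea.trans ha
  rcases sq_eq_one_iff.mp ha with ha | ha <;> rcases sq_eq_one_iff.mp he with he | he <;>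
    simp [ha, he]
end

section
/- For integers n, d with 1 ≤ n ≤ d, one has n!·(d−n)!/n^d ≥ e^{−(1 + 1/e)·d}. -/
/-- Stirling lower bound: n^n e^{-n} ≤ n!. -/
lemma stirling_lb' (n : ℕ) : (n : ℝ) ^ n * Real.exp (-(n : ℝ)) ≤ n.factorial := by
  induction n with
  | zero => simp
  | succ k ih =>
    rcases Nat.eq_zero_or_pos k with hk | hk
    · subst hk
      have h1 : Real.exp (-(1:ℝ)) ≤ 1 := Real.exp_le_one_iff.mpr (by norm_num)
      simpa [Nat.factorial] using h1
    · have hk0 : (0 : ℝ) < (k : ℝ) := by exact_mod_cast hk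
      -- (k+1)^k ≤ e * k^k
      have key : ((k : ℝ) + 1) ^ k ≤ Real.exp 1 * (k : ℝ) ^ k := by
        have h1 : ((k : ℝ) + 1) = (1 + 1 / k) * k := by field_simp
        have h2 : (1 + 1 / (k : ℝ)) ≤ Real.exp (1 / k) := by
          have := Real.add_one_le_exp (1 / (k : ℝ))
          linarith
        have h3 : (1 + 1 / (k : ℝ)) ^ k ≤ Real.exp (1 / k) ^ k := by
          apply pow_le_pow_left₀ (by positivity) h2
        have h4 : Real.exp (1 / (k : ℝ)) ^ k = Real.exp 1 := by
          rw [← Real.exp_nat_mul]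
          congr 1
          field_simp
        calc ((k : ℝ) + 1) ^ k = (1 + 1 / (k : ℝ)) ^ k * (k : ℝ) ^ k := by
              rw [h1, mul_pow]
          _ ≤ Real.exp (1 / (k : ℝ)) ^ k * (k : ℝ) ^ k := by
              apply mul_le_mul_of_nonneg_right h3 (by positivity)
          _ = Real.exp 1 * (k : ℝ) ^ k := by rw [h4]
      have hfact : ((k + 1).factorial : ℝ) = ((k : ℝ) + 1) * k.factorial := by
        rw [Nat.factorial_succ]; push_cast; ring
      have hexp : Real.exp (-((k : ℝ) + 1)) = Real.exp (-(k : ℝ)) * Real.exp (-1) := by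
        rw [← Real.exp_add]; ring_nf
      have hexppos : (0 : ℝ) < Real.exp (-(k : ℝ)) := Real.exp_pos _
      have he1 : Real.exp 1 * Real.exp (-1) = 1 := by
        rw [← Real.exp_add]; norm_num
      calc ((k + 1 : ℕ) : ℝ) ^ (k + 1) * Real.exp (-((k + 1 : ℕ) : ℝ))
          = ((k : ℝ) + 1) * (((k : ℝ) + 1) ^ k * Real.exp (-(k : ℝ)) * Real.exp (-1)) := by
            push_cast; rw [hexp]; ring
        _ ≤ ((k : ℝ) + 1) * (Real.exp 1 * (k : ℝ) ^ k * Real.exp (-(k : ℝ)) * Real.exp (-1)) := by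
            apply mul_le_mul_of_nonneg_left _ (by positivity)
            apply mul_le_mul_of_nonneg_right _ (Real.exp_pos _).le
            exact mul_le_mul_of_nonneg_right key hexppos.le
        _ = ((k : ℝ) + 1) * ((k : ℝ) ^ k * Real.exp (-(k : ℝ))) := by
            rw [show Real.exp 1 * (k:ℝ)^k * Real.exp (-(k:ℝ)) * Real.exp (-1)
              = (Real.exp 1 * Real.exp (-1)) * ((k:ℝ)^k * Real.exp (-(k:ℝ))) by ring, he1, one_mul]
        _ ≤ ((k : ℝ) + 1) * k.factorial := by
            apply mul_le_mul_of_nonneg_left ih (by positivity)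
        _ = ((k + 1).factorial : ℝ) := hfact.symm

/-- x log x ≥ -1/e for x > 0. -/
lemma xlogx_lb (x : ℝ) (hx : 0 < x) : -(Real.exp 1)⁻¹ ≤ x * Real.log x := by
  have h := Real.log_le_sub_one_of_pos (show (0:ℝ) < x⁻¹ * (Real.exp 1)⁻¹ by positivity)
  rw [Real.log_mul (by positivity) (by positivity), Real.log_inv, Real.log_inv,
    Real.log_exp] at h
  -- -log x - 1 ≤ x⁻¹ * e⁻¹ - 1
  have h2 : -Real.log x ≤ x⁻¹ * (Real.exp 1)⁻¹ := by linarith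
  have h3 : x * (-Real.log x) ≤ x * (x⁻¹ * (Real.exp 1)⁻¹) :=
    mul_le_mul_of_nonneg_left h2 hx.le
  have h4 : x * (x⁻¹ * (Real.exp 1)⁻¹) = (Real.exp 1)⁻¹ := by
    field_simp
  rw [h4] at h3
  linarith

/-- For integers 1 ≤ n ≤ d, one has n!·(d−n)!/n^d ≥ e^{−(1 + 1/e)·d}. -/
theorem stmt_10 (n d : ℕ) (hn : 1 ≤ n) (hnd : n ≤ d) :
    Real.exp (-(1 + (Real.exp 1)⁻¹) * (d : ℝ)) ≤
      ((n.factorial : ℝ) * ((d - n).factorial : ℝ)) / (n : ℝ) ^ d := by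
  set m : ℕ := d - n with hm
  have hdm : n + m = d := by omega
  have hn0 : (0 : ℝ) < (n : ℝ) := by exact_mod_cast hn
  have hnd' : (n : ℝ) ≤ (d : ℝ) := by exact_mod_cast hnd
  -- key: exp(-d/e) * n^m ≤ m^m
  have key : Real.exp (-(d : ℝ) * (Real.exp 1)⁻¹) * (n : ℝ) ^ m ≤ (m : ℝ) ^ m := by
    rcases Nat.eq_zero_or_pos m with hm0 | hm0
    · simp only [hm0, pow_zero, mul_one]
      apply Real.exp_le_one_iff.mpr
      have h0 : (0:ℝ) ≤ (d:ℝ) * (Real.exp 1)⁻¹ := by positivity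
      rw [neg_mul]
      linarith
    · have hm0' : (0 : ℝ) < (m : ℝ) := by exact_mod_cast hm0
      have hx : (0 : ℝ) < (m : ℝ) / n := by positivity
      have hpow : ((m : ℝ) / n) ^ m = Real.exp ((m : ℝ) * Real.log ((m : ℝ) / n)) := by
        rw [Real.exp_nat_mul, Real.exp_log hx]
      have hxl := xlogx_lb ((m : ℝ) / n) hx
      have hlog : -(d : ℝ) * (Real.exp 1)⁻¹ ≤ (m : ℝ) * Real.log ((m : ℝ) / n) := by
        have h1 : (n : ℝ) * (-(Real.exp 1)⁻¹) ≤ (n : ℝ) * (((m : ℝ) / n) * Real.log ((m : ℝ) / n)) :=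
          mul_le_mul_of_nonneg_left hxl hn0.le
        have h2 : (n : ℝ) * (((m : ℝ) / n) * Real.log ((m : ℝ) / n))
            = (m : ℝ) * Real.log ((m : ℝ) / n) := by field_simp
        have h3 : -(d : ℝ) * (Real.exp 1)⁻¹ ≤ (n : ℝ) * (-(Real.exp 1)⁻¹) := by
          have : (0 : ℝ) < (Real.exp 1)⁻¹ := by positivity
          nlinarith
        linarith [h1, h2 ▸ h1]
      have := Real.exp_le_exp.mpr hlog
      rw [← hpow] at this
      calc Real.exp (-(d : ℝ) * (Real.exp 1)⁻¹) * (n : ℝ) ^ m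
          ≤ ((m : ℝ) / n) ^ m * (n : ℝ) ^ m := by
            apply mul_le_mul_of_nonneg_right this (by positivity)
        _ = (m : ℝ) ^ m := by
            rw [div_pow, div_mul_cancel₀]
            positivity
  -- combine with Stirling
  have s1 := stirling_lb' n
  have s2 := stirling_lb' m
  have hprod : (n : ℝ) ^ n * Real.exp (-(n : ℝ)) * ((m : ℝ) ^ m * Real.exp (-(m : ℝ)))
      ≤ (n.factorial : ℝ) * (m.factorial : ℝ) := by
    apply mul_le_mul s1 s2 (by positivity) (by positivity)
  have hd : (d : ℝ) = (n : ℝ) + m := by exact_mod_cast hdm.symm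
  rw [le_div_iff₀ (by positivity)]
  calc Real.exp (-(1 + (Real.exp 1)⁻¹) * (d : ℝ)) * (n : ℝ) ^ d
      = (n : ℝ) ^ n * Real.exp (-(n : ℝ)) * (Real.exp (-(m : ℝ)) *
          (Real.exp (-(d : ℝ) * (Real.exp 1)⁻¹) * (n : ℝ) ^ m)) := by
        rw [hd, ← hdm, pow_add]
        rw [show -(1 + (Real.exp 1)⁻¹) * ((n : ℝ) + m)
          = (-(n:ℝ)) + ((-(m:ℝ)) + (-((n:ℝ)+m) * (Real.exp 1)⁻¹)) by ring]
        rw [Real.exp_add, Real.exp_add]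
        ring
    _ ≤ (n : ℝ) ^ n * Real.exp (-(n : ℝ)) * (Real.exp (-(m : ℝ)) * (m : ℝ) ^ m) := by
        apply mul_le_mul_of_nonneg_left _ (by positivity)
        exact mul_le_mul_of_nonneg_left key (Real.exp_pos _).le
    _ = (n : ℝ) ^ n * Real.exp (-(n : ℝ)) * ((m : ℝ) ^ m * Real.exp (-(m : ℝ))) := by ring
    _ ≤ (n.factorial : ℝ) * (m.factorial : ℝ) := hprod
end

section
/- For integers n, d with 1 ≤ n ≤ d, one has (n!·(d−n)!)^{1/d} ≥ e^{−1−1/e}·max{n, d−n} ≥ d/(2e²). -/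
open Real

private lemma aux_pow (n : ℕ) : ((n : ℝ) + 1) ^ n ≤ Real.exp 1 * (n : ℝ) ^ n := by
  rcases Nat.eq_zero_or_pos n with h | h
  · subst h; simpa using Real.one_le_exp zero_le_one
  · have hn : (0:ℝ) < n := by exact_mod_cast h
    have h1 : (n:ℝ) + 1 ≤ Real.exp (1/n) * n := by
      have h2 := Real.add_one_le_exp (1/(n:ℝ))
      have : ((1:ℝ)/n + 1) * n = (n:ℝ) + 1 := by field_simp; ring
      nlinarith
    calc ((n:ℝ)+1)^n ≤ (Real.exp (1/n) * n)^n := by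
          apply pow_le_pow_left₀ (by positivity) h1
      _ = Real.exp (1/n) ^ n * (n:ℝ)^n := mul_pow _ _ _
      _ = Real.exp 1 * (n:ℝ)^n := by
          rw [← Real.exp_nat_mul]
          congr 1
          field_simp

private lemma stirling_lower (n : ℕ) : ((n : ℝ)) ^ n ≤ (n.factorial : ℝ) * Real.exp 1 ^ n := by
  induction n with
  | zero => simp
  | succ n ih =>
    have h1 := aux_pow n
    have hf : (1:ℝ) ≤ (n.factorial : ℝ) := by exact_mod_cast n.factorial_pos
    have he : (0:ℝ) < Real.exp 1 := Real.exp_pos 1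
    have hep : (0:ℝ) < Real.exp 1 ^ n := by positivity
    have h2 : ((n:ℝ)+1)^n ≤ Real.exp 1 * ((n.factorial : ℝ) * Real.exp 1 ^ n) := by
      calc ((n:ℝ)+1)^n ≤ Real.exp 1 * (n:ℝ)^n := h1
        _ ≤ Real.exp 1 * ((n.factorial : ℝ) * Real.exp 1 ^ n) :=
            mul_le_mul_of_nonneg_left ih he.le
    have : ((n:ℝ)+1)^(n+1) ≤ ((n+1) * n.factorial : ℝ) * Real.exp 1 ^ (n+1) := by
      rw [pow_succ, pow_succ]
      nlinarith [pow_nonneg (by positivity : (0:ℝ) ≤ (n:ℝ)+1) n]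
    push_cast [Nat.factorial_succ]
    push_cast at this
    convert this using 2 <;> ring

private lemma log_le_div_e {y : ℝ} (hy : 0 < y) : Real.log y ≤ y * (Real.exp 1)⁻¹ := by
  have h := Real.log_le_sub_one_of_pos (show 0 < y * (Real.exp 1)⁻¹ by positivity)
  rw [Real.log_mul (ne_of_gt hy) (by positivity), Real.log_inv, Real.log_exp] at h
  linarith

/-- For integers 1 ≤ n ≤ d:
(n!·(d−n)!)^{1/d} ≥ e^{−1−1/e}·max{n, d−n} ≥ d/(2e²). -/
theorem stmt_11 (n d : ℕ) (hn : 1 ≤ n) (hnd : n ≤ d) :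
    Real.exp (-1 - (Real.exp 1)⁻¹) * (max n (d - n) : ℕ) ≤
        ((n.factorial * (d - n).factorial : ℕ) : ℝ) ^ ((1 : ℝ) / d) ∧
      (d : ℝ) / (2 * Real.exp 1 ^ 2) ≤ Real.exp (-1 - (Real.exp 1)⁻¹) * (max n (d - n) : ℕ) := by
  set m := max n (d - n) with hmdef
  set k := min n (d - n) with hkdef
  have hmk : m + k = d := by
    have := max_add_min n (d - n)
    omega
  have hkm : k ≤ m := min_le_max
  have hm1 : 1 ≤ m := le_trans hn (le_max_left _ _)
  have hd1 : 1 ≤ d := le_trans hn hnd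
  set E := Real.exp 1 with hE
  have heE : (0:ℝ) < E := Real.exp_pos 1
  have he1 : (1:ℝ) ≤ E := Real.one_le_exp zero_le_one
  set C := Real.exp (-1 - E⁻¹) with hC
  have hC0 : 0 < C := Real.exp_pos _
  set M := (m : ℝ) with hM
  have hM1 : (1:ℝ) ≤ M := by rw [hM]; exact_mod_cast hm1
  have hMd : M ≤ (d:ℝ) := by rw [hM]; exact_mod_cast le_trans (Nat.le_add_right m k) hmk.le
  set K := (k : ℝ) with hK
  have hK0 : (0:ℝ) ≤ K := Nat.cast_nonneg k
  -- second part
  have h2m : (d:ℝ) ≤ 2 * M := by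
    have h : d ≤ 2 * m := by omega
    rw [hM]; exact_mod_cast h
  have part2 : (d : ℝ) / (2 * E ^ 2) ≤ C * M := by
    have hCe : (E^2)⁻¹ ≤ C := by
      rw [hC, hE]
      rw [← Real.exp_nat_mul]
      rw [← Real.exp_neg]
      apply Real.exp_le_exp.mpr
      have : (Real.exp 1)⁻¹ ≤ 1 := by
        rw [inv_le_one_iff₀]; right; exact he1
      push_cast
      linarith
    calc (d:ℝ) / (2 * E^2) = (d/2) * (E^2)⁻¹ := by ring
      _ ≤ M * (E^2)⁻¹ := by
          apply mul_le_mul_of_nonneg_right (by linarith) (by positivity)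
      _ ≤ M * C := mul_le_mul_of_nonneg_left hCe (by linarith)
      _ = C * M := mul_comm _ _
  refine ⟨?_, part2⟩
  -- first part
  have hfac : (n.factorial * (d - n).factorial : ℕ) = m.factorial * k.factorial := by
    rcases le_total n (d - n) with h | h
    · simp [hmdef, hkdef, max_eq_right h, min_eq_left h, mul_comm]
    · simp [hmdef, hkdef, max_eq_left h, min_eq_right h]
  -- core: exp(-E⁻¹)^d * M^k ≤ K^k
  have hcore : Real.exp (-E⁻¹) ^ d * M ^ k ≤ K ^ k := by
    have hMk : M ^ k ≤ (d:ℝ) ^ k := pow_le_pow_left₀ (by linarith) hMd k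
    have hexple : Real.exp (-E⁻¹) ≤ 1 := by
      rw [Real.exp_le_one_iff]
      simp [heE.le, inv_nonneg]
    rcases Nat.eq_zero_or_pos k with hk0 | hk1
    · simp only [hk0, pow_zero, mul_one]
      exact pow_le_one₀ (Real.exp_pos _).le hexple
    · have hKpos : (0:ℝ) < K := by rw [hK]; exact_mod_cast hk1
      have hdK : (0:ℝ) < (d:ℝ)/K := by positivity
      have h1 : ((d:ℝ)/K)^k ≤ Real.exp E⁻¹ ^ d := by
        rw [← Real.exp_log hdK, ← Real.exp_nat_mul, ← Real.exp_nat_mul]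
        apply Real.exp_le_exp.mpr
        calc (k:ℝ) * Real.log ((d:ℝ)/K)
            ≤ (k:ℝ) * (((d:ℝ)/K) * E⁻¹) :=
              mul_le_mul_of_nonneg_left (log_le_div_e hdK) hK0
          _ = (d:ℝ) * E⁻¹ := by
              rw [hK]; field_simp
      have h2 : (d:ℝ)^k = ((d:ℝ)/K)^k * K^k := by
        rw [div_pow, div_mul_cancel₀]
        positivity
      have h3 : Real.exp (-E⁻¹) ^ d * Real.exp E⁻¹ ^ d = 1 := by
        rw [← mul_pow, ← Real.exp_add, neg_add_cancel, Real.exp_zero, one_pow]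
      calc Real.exp (-E⁻¹) ^ d * M ^ k
          ≤ Real.exp (-E⁻¹) ^ d * (d:ℝ) ^ k :=
            mul_le_mul_of_nonneg_left hMk (by positivity)
        _ = Real.exp (-E⁻¹) ^ d * (((d:ℝ)/K)^k * K^k) := by rw [← h2]
        _ ≤ Real.exp (-E⁻¹) ^ d * (Real.exp E⁻¹ ^ d * K^k) := by
            apply mul_le_mul_of_nonneg_left _ (by positivity)
            exact mul_le_mul_of_nonneg_right h1 (by positivity)
        _ = (Real.exp (-E⁻¹) ^ d * Real.exp E⁻¹ ^ d) * K^k := by ring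
        _ = K^k := by rw [h3, one_mul]
  -- key : (C*M)^d ≤ m! * k!
  have hA := stirling_lower m
  have hB := stirling_lower k
  have hCE : C * E = Real.exp (-E⁻¹) := by
    rw [hC, hE, ← Real.exp_add]; ring_nf
  have hmain : (C * M) ^ d * E ^ d ≤ ((m.factorial * k.factorial : ℕ) : ℝ) * E ^ d := by
    calc (C * M) ^ d * E ^ d = (C*E)^d * (M^m * M^k) := by
          rw [← hmk, pow_add, mul_pow, mul_pow]; ring
      _ = Real.exp (-E⁻¹) ^ d * M^k * M^m := by rw [hCE]; ring
      _ ≤ K^k * M^m := mul_le_mul_of_nonneg_right hcore (by positivity)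
      _ ≤ ((k.factorial : ℝ) * E ^ k) * ((m.factorial : ℝ) * E ^ m) := by
          apply mul_le_mul hB hA (by positivity) (by positivity)
      _ = ((m.factorial * k.factorial : ℕ) : ℝ) * E ^ (m + k) := by
          push_cast; ring
      _ = ((m.factorial * k.factorial : ℕ) : ℝ) * E ^ d := by rw [hmk]
  have key : (C * M) ^ d ≤ ((n.factorial * (d - n).factorial : ℕ) : ℝ) := by
    rw [hfac]
    exact le_of_mul_le_mul_right hmain (by positivity)
  have hd0 : d ≠ 0 := by omega
  have hx : (0:ℝ) ≤ C * M := by positivity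
  calc C * M = ((C*M)^d) ^ ((d:ℝ)⁻¹) := (Real.pow_rpow_inv_natCast hx hd0).symm
    _ ≤ ((n.factorial * (d - n).factorial : ℕ) : ℝ) ^ ((d:ℝ)⁻¹) :=
        Real.rpow_le_rpow (by positivity) key (by positivity)
    _ = ((n.factorial * (d - n).factorial : ℕ) : ℝ) ^ ((1:ℝ)/d) := by rw [one_div]
end

section
/- Let d ≥ 2, let 2 ≤ μ₁ < μ₂ < ⋯ < μ_{d+1} be squarefree integers with μ_n ≤ λn for all n (where λ ≥ 2 is real), and let 1 ≤ ν ≤ d+1. If x, y ∈ ℤ satisfy x² < μ₁y², then |∏_{1≤n≤d+1, n≠ν}(x² − μ_n y²)| ≥ ((d−1)!/λ^{d−1})·x^{2d−2}. -/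
/-!
Every factor `μ_n y² - x² = (μ_n - μ₁) y² + (μ₁ y² - x²)` of the absolute value is a
positive integer, hence at least `1`. Since the `μ_n` are strictly increasing integers,
`μ_n - μ₁ ≥ n` (indexing from `0`), and `x² < μ₁ y² ≤ λ y²` gives `μ_n y² - x² ≥ n x² / λ`.
Keep `d - 1` of the factors with `n ≠ 0, ν` and bound the rest by `1`; the kept indices are
`d - 1` distinct positive integers, whose product is at least `(d - 1)!`.
-/

open Finset

theorem Finset.factorial_card_le_prod_id {s : Finset ℕ} (hs : 0 ∉ s) :
    (#s).factorial ≤ ∏ n ∈ s, n := by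
  induction s using Finset.induction_on_max with
  | empty => simp
  | insert a t hlt ih =>
    have ha : a ∉ t := fun h => (hlt a h).false
    have ht0 : 0 ∉ t := fun h => hs (mem_insert_of_mem h)
    have hcard : #t + 1 ≤ a := by
      have : t ⊆ Ioo 0 a := fun n hn =>
        mem_Ioo.2 ⟨Nat.pos_of_ne_zero fun h => ht0 (h ▸ hn), hlt n hn⟩
      have := card_le_card this
      have ha₀ : a ≠ 0 := fun h => hs (h ▸ mem_insert_self a t)
      rw [Nat.card_Ioo] at this
      omega
    rw [card_insert_of_notMem ha, prod_insert ha, Nat.factorial_succ]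
    exact Nat.mul_le_mul hcard (ih ht0)

theorem StrictMono.apply_zero_add_le {n : ℕ} {f : Fin (n + 1) → ℤ} (hf : StrictMono f)
    (i : Fin (n + 1)) : f 0 + i ≤ f i := by
  induction i using Fin.induction with
  | zero => simp
  | succ i ih =>
    have := hf i.castSucc_lt_succ
    simp only [Fin.val_succ, Fin.val_castSucc] at ih ⊢
    omega

theorem mul_div_le_mul_sq_sub_sq {lam m₀ m k x y : ℝ} (hlam : 0 < lam) (hm₀ : m₀ ≤ lam)
    (hxy : x ^ 2 < m₀ * y ^ 2) (hk : k ≤ m - m₀) (hk₀ : 0 ≤ k) :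
    k * (x ^ 2 / lam) ≤ m * y ^ 2 - x ^ 2 := by
  have hy : x ^ 2 / lam ≤ y ^ 2 := by
    rw [div_le_iff₀ hlam]
    nlinarith [sq_nonneg y]
  calc k * (x ^ 2 / lam) ≤ k * y ^ 2 := by gcongr
    _ ≤ (m - m₀) * y ^ 2 := by gcongr
    _ ≤ m * y ^ 2 - x ^ 2 := by linarith

theorem Fin.factorial_mul_pow_le_prod_erase {m : ℕ} {f : Fin (m + 1) → ℝ} {c : ℝ} (hc : 0 ≤ c)
    (hf₁ : ∀ n, 1 ≤ f n) (hf : ∀ n : Fin (m + 1), (n : ℕ) * c ≤ f n) (ν : Fin (m + 1)) :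
    (m - 1).factorial * c ^ (m - 1) ≤ ∏ n ∈ univ.erase ν, f n := by
  obtain ⟨T, hT, hTcard⟩ := exists_subset_card_eq (s := (univ.erase ν).erase 0) (n := m - 1)
    (by grind [pred_card_le_card_erase, card_erase_of_mem, card_univ, Fintype.card_fin])
  have hT₀ : 0 ∉ T.map Fin.valEmbedding := by
    simpa using fun h : (0 : Fin (m + 1)) ∈ T => by simpa using hT h
  have hfact := factorial_card_le_prod_id hT₀
  rw [card_map, hTcard, prod_map] at hfact
  calc (m - 1).factorial * c ^ (m - 1) ≤ (∏ n ∈ T, (n : ℕ) : ℕ) * c ^ (m - 1) := by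
        gcongr; exact_mod_cast hfact
    _ = ∏ n ∈ T, ((n : ℕ) * c) := by
        rw [prod_mul_distrib, Finset.prod_const, hTcard, Nat.cast_prod]
    _ ≤ ∏ n ∈ T, f n := prod_le_prod (fun _ _ => by positivity) fun n _ => hf n
    _ ≤ ∏ n ∈ univ.erase ν, f n :=
        prod_le_prod_of_subset_of_one_le (hT.trans (erase_subset _ _))
          (fun n _ => zero_le_one.trans (hf₁ n)) fun n _ _ => hf₁ n

theorem stmt_12_general (d : ℕ) (lam : ℝ) (hlam : 2 ≤ lam)
    (μ : Fin (d + 1) → ℤ)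
    (hμmono : StrictMono μ) (hμlam : ∀ n : Fin (d + 1), (μ n : ℝ) ≤ lam * ((n : ℕ) + 1))
    (ν : Fin (d + 1)) (x y : ℤ) (hxy : (x : ℝ) ^ 2 < (μ 0 : ℝ) * (y : ℝ) ^ 2) :
    ((d - 1).factorial : ℝ) / lam ^ (d - 1) * (x : ℝ) ^ (2 * d - 2) ≤
      ((|∏ n ∈ Finset.univ.erase ν, (x ^ 2 - μ n * y ^ 2)| : ℤ) : ℝ) := by
  set F : Fin (d + 1) → ℤ := fun n => μ n * y ^ 2 - x ^ 2
  have hF : ∀ n : Fin (d + 1), (n : ℕ) * ((x : ℝ) ^ 2 / lam) ≤ F n := fun n => by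
    have hgap : ((n : ℕ) : ℤ) ≤ μ n - μ 0 := by linarith [hμmono.apply_zero_add_le n]
    push_cast [F]
    exact mul_div_le_mul_sq_sub_sq (by linarith) (by simpa using hμlam 0) hxy
      (by exact_mod_cast hgap) (Nat.cast_nonneg _)
  have hF₁ : ∀ n : Fin (d + 1), (1 : ℝ) ≤ F n := fun n => by
    have hpos : (0 : ℝ) < F n := by
      have := hμmono.monotone (Fin.zero_le n)
      push_cast [F]
      nlinarith [(Int.cast_le (R := ℝ)).2 this, sq_nonneg (y : ℝ)]
    exact_mod_cast (Int.cast_pos.1 hpos : 0 < F n)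
  have habs : |∏ n ∈ univ.erase ν, (x ^ 2 - μ n * y ^ 2)| = ∏ n ∈ univ.erase ν, F n := by
    rw [abs_prod]
    exact prod_congr rfl fun n _ => by
      rw [abs_sub_comm, abs_of_pos (by exact_mod_cast (zero_lt_one.trans_le (hF₁ n)))]
  rw [habs, Int.cast_prod, div_mul_eq_mul_div, mul_div_assoc,
    show 2 * d - 2 = 2 * (d - 1) by omega, pow_mul, ← div_pow]
  exact Fin.factorial_mul_pow_le_prod_erase (by positivity) hF₁ hF ν

/-- For d ≥ 2, squarefree integers 2 ≤ μ₁ < ⋯ < μ_{d+1} with μ_n ≤ λ·n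
(λ ≥ 2 real), and x, y ∈ ℤ with x² < μ₁y²:
|∏_{n≠ν}(x² − μ_n y²)| ≥ ((d−1)!/λ^{d−1})·x^{2d−2}. -/
theorem stmt_12 (d : ℕ) (hd : 2 ≤ d) (lam : ℝ) (hlam : 2 ≤ lam)
    (μ : Fin (d + 1) → ℤ) (hμ1 : 2 ≤ μ 0) (hμsf : ∀ n, Squarefree (μ n))
    (hμmono : StrictMono μ) (hμlam : ∀ n : Fin (d + 1), (μ n : ℝ) ≤ lam * ((n : ℕ) + 1))
    (ν : Fin (d + 1)) (x y : ℤ) (hxy : (x : ℝ) ^ 2 < (μ 0 : ℝ) * (y : ℝ) ^ 2) :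
    ((d - 1).factorial : ℝ) / lam ^ (d - 1) * (x : ℝ) ^ (2 * d - 2) ≤
      ((|∏ n ∈ Finset.univ.erase ν, (x ^ 2 - μ n * y ^ 2)| : ℤ) : ℝ) :=
  stmt_12_general d lam hlam μ hμmono hμlam ν x y hxy
end

section
/- Let d ≥ 5 be an integer, let 0 < a₁ < ⋯ < a_{d−1} < p and 0 < b₁ < ⋯ < b_{d−2} < p be integers with p prime. Then the binary forms F₁(X,Y) = X·∏_{i=1}^{d−1}(X − a_iY) and F₂(X,Y) = (X − pY)·X·∏_{j=1}^{d−2}(X − b_jY) are not GL(2,ℚ)-isomorphic. -/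
/-!
A matrix `M` with `F₁ = F₂ ∘ M` induces a Möbius transformation sending the `d` roots
`{0, a₁, …, a_{d-1}}` of `F₁` bijectively onto the `d` roots `{p, 0, b₁, …, b_{d-2}}` of `F₂`.
Möbius transformations preserve cross-ratios, so the cross-ratio `p (b₁ - b₂) / ((p - b₂) b₁)` of
`p, 0, b₁, b₂` is also the cross-ratio of four distinct integers in `[0, p)`. The former has
`p`-adic valuation `1`, the latter valuation `0`.
-/

open Finset

def splitForm {K : Type*} [Field K] (R : Finset K) (x y : K) : K :=
  ∏ r ∈ R, (x - r * y)

lemma splitForm_insert {K : Type*} [Field K] [DecidableEq K] {R : Finset K} {r : K} (hr : r ∉ R)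
    (x y : K) : splitForm (insert r R) x y = (x - r * y) * splitForm R x y :=
  prod_insert hr

section Mobius

variable {K : Type*} [Field K] (M : Matrix (Fin 2) (Fin 2) K)

def mobius (z : K) : K :=
  (M 0 0 * z + M 0 1) / (M 1 0 * z + M 1 1)

variable {M}

lemma mobius_sub_mobius {z w : K} (hz : M 1 0 * z + M 1 1 ≠ 0) (hw : M 1 0 * w + M 1 1 ≠ 0) :
    mobius M z - mobius M w =
      M.det * (z - w) / ((M 1 0 * z + M 1 1) * (M 1 0 * w + M 1 1)) := by
  rw [mobius, mobius, div_sub_div _ _ hz hw, Matrix.det_fin_two]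
  ring

/-- The invariance of the cross-ratio `[z₁, z₂; z₃, z₄]`, with denominators cleared. -/
lemma mobius_cross_ratio {z₁ z₂ z₃ z₄ : K} (h₁ : M 1 0 * z₁ + M 1 1 ≠ 0)
    (h₂ : M 1 0 * z₂ + M 1 1 ≠ 0) (h₃ : M 1 0 * z₃ + M 1 1 ≠ 0) (h₄ : M 1 0 * z₄ + M 1 1 ≠ 0) :
    (mobius M z₁ - mobius M z₂) * (mobius M z₃ - mobius M z₄) * ((z₁ - z₄) * (z₃ - z₂)) =
      (mobius M z₁ - mobius M z₄) * (mobius M z₃ - mobius M z₂) * ((z₁ - z₂) * (z₃ - z₄)) := by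
  rw [mobius_sub_mobius h₁ h₂, mobius_sub_mobius h₃ h₄, mobius_sub_mobius h₁ h₄,
    mobius_sub_mobius h₃ h₂]
  field_simp

lemma denom_ne_zero_of_eq_mul (hdet : M.det ≠ 0) {z s : K}
    (h : M 0 0 * z + M 0 1 = s * (M 1 0 * z + M 1 1)) : M 1 0 * z + M 1 1 ≠ 0 := by
  intro hv
  rw [hv, mul_zero] at h
  exact hdet (by rw [Matrix.det_fin_two]; linear_combination M 0 0 * hv - M 1 0 * h)

lemma mobius_injOn (hdet : M.det ≠ 0) : Set.InjOn (mobius M) {z | M 1 0 * z + M 1 1 ≠ 0} := by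
  intro z hz w hw h
  have := mobius_sub_mobius hz hw
  rw [h, sub_self, eq_comm, div_eq_zero_iff] at this
  simp_all [sub_eq_zero]

variable {T S : Finset K}

lemma exists_mem_eq_mul_of_splitForm_eq
    (hTS : ∀ x y, splitForm T x y = splitForm S (M 0 0 * x + M 0 1 * y) (M 1 0 * x + M 1 1 * y))
    {z : K} (hz : z ∈ T) : ∃ s ∈ S, M 0 0 * z + M 0 1 = s * (M 1 0 * z + M 1 1) := by
  have hzero : splitForm T z 1 = 0 := prod_eq_zero hz (by ring)
  rw [hTS, splitForm, prod_eq_zero_iff] at hzero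
  obtain ⟨s, hs, hzs⟩ := hzero
  exact ⟨s, hs, by linear_combination hzs⟩

lemma denom_ne_zero_of_splitForm_eq (hdet : M.det ≠ 0)
    (hTS : ∀ x y, splitForm T x y = splitForm S (M 0 0 * x + M 0 1 * y) (M 1 0 * x + M 1 1 * y))
    {z : K} (hz : z ∈ T) : M 1 0 * z + M 1 1 ≠ 0 := by
  obtain ⟨s, -, hs⟩ := exists_mem_eq_mul_of_splitForm_eq hTS hz
  exact denom_ne_zero_of_eq_mul hdet hs

lemma image_mobius_eq_of_splitForm_eq [DecidableEq K] (hdet : M.det ≠ 0)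
    (hcard : S.card ≤ T.card)
    (hTS : ∀ x y, splitForm T x y = splitForm S (M 0 0 * x + M 0 1 * y) (M 1 0 * x + M 1 1 * y)) :
    T.image (mobius M) = S := by
  refine eq_of_subset_of_card_le (fun s hs => ?_) ?_
  · obtain ⟨z, hz, rfl⟩ := mem_image.mp hs
    obtain ⟨s, hs, hzs⟩ := exists_mem_eq_mul_of_splitForm_eq hTS hz
    rwa [mobius, hzs, mul_div_cancel_right₀ _ (denom_ne_zero_of_eq_mul hdet hzs)]
  · rwa [card_image_of_injOn fun z hz w hw => mobius_injOn hdet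
      (denom_ne_zero_of_splitForm_eq hdet hTS hz) (denom_ne_zero_of_splitForm_eq hdet hTS hw)]

end Mobius

section NatRoots

variable {n : ℕ} {c : Fin n → ℕ}

def natRoots (c : Fin n → ℕ) : Finset ℚ :=
  insert 0 (univ.image fun i => (c i : ℚ))

lemma zero_notMem_image_natCast (hc0 : ∀ i, 0 < c i) :
    (0 : ℚ) ∉ univ.image fun i => (c i : ℚ) := by
  simpa using fun i => (hc0 i).ne'

lemma splitForm_natRoots (hc : StrictMono c) (hc0 : ∀ i, 0 < c i) (x y : ℚ) :
    splitForm (natRoots c) x y = x * ∏ i, (x - c i * y) := by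
  rw [natRoots, splitForm_insert (zero_notMem_image_natCast hc0), zero_mul, sub_zero, splitForm,
    prod_image fun i _ j _ h => hc.injective (Nat.cast_injective h)]

lemma card_natRoots (hc : StrictMono c) (hc0 : ∀ i, 0 < c i) : (natRoots c).card = n + 1 := by
  rw [natRoots, card_insert_of_notMem (zero_notMem_image_natCast hc0),
    card_image_of_injective _ fun i j h => hc.injective (Nat.cast_injective h), card_fin]

lemma exists_natCast_lt_of_mem_natRoots {p : ℕ} (hp : 0 < p) (hcp : ∀ i, c i < p) {z : ℚ}
    (hz : z ∈ natRoots c) : ∃ m < p, (m : ℚ) = z := by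
  simp only [natRoots, mem_insert, mem_image, mem_univ, true_and] at hz
  rcases hz with rfl | ⟨i, rfl⟩
  exacts [⟨0, hp, Nat.cast_zero⟩, ⟨c i, hcp i, rfl⟩]

lemma natCast_notMem_natRoots {p : ℕ} (hp : 0 < p) (hcp : ∀ i, c i < p) :
    (p : ℚ) ∉ natRoots c := fun hz => by
  obtain ⟨m, hm, hmp⟩ := exists_natCast_lt_of_mem_natRoots hp hcp hz
  exact hm.ne (Nat.cast_injective hmp)

end NatRoots

lemma Nat.Prime.cross_ratio_ne_of_lt {p : ℕ} (hp : p.Prime) {c₁ c₂ n₁ n₂ n₃ n₄ : ℕ}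
    (hc₁ : 0 < c₁) (hc₂ : 0 < c₂) (hc₁p : c₁ < p) (hc₂p : c₂ < p)
    (hn₁ : n₁ < p) (hn₂ : n₂ < p) (hn₃ : n₃ < p) (hn₄ : n₄ < p) (h₁₂ : n₁ ≠ n₂) (h₃₄ : n₃ ≠ n₄) :
    (p : ℤ) * (c₁ - c₂) * ((n₁ - n₄) * (n₃ - n₂)) ≠
      (p - c₂) * c₁ * ((n₁ - n₂) * (n₃ - n₄)) := by
  -- `p` divides the left side, but none of the four factors on the right.
  intro h
  have hpZ : _root_.Prime (p : ℤ) := Nat.prime_iff_prime_int.mp hp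
  have hsmall : ∀ m : ℤ, m ≠ 0 → |m| < p → ¬ (p : ℤ) ∣ m :=
    fun m hm hmp hdvd => hm (Int.eq_zero_of_abs_lt_dvd hdvd hmp)
  have hdvd : (p : ℤ) ∣ (p - c₂) * c₁ * ((n₁ - n₂) * (n₃ - n₄)) :=
    h ▸ dvd_mul_of_dvd_left (dvd_mul_right _ _) _
  rcases hpZ.dvd_mul.mp hdvd with h | h <;> rcases hpZ.dvd_mul.mp h with h | h
  all_goals exact hsmall _ (by omega) (abs_lt.mpr ⟨by omega, by omega⟩) h

/-- For d ≥ 5, integers 0 < a₁ < ⋯ < a_{d−1} < p and 0 < b₁ < ⋯ < b_{d−2} < p with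
p prime, the binary forms X·∏(X − a_iY) and (X − pY)·X·∏(X − b_jY) are not
GL(2,ℚ)-isomorphic. -/
theorem stmt_13 (d : ℕ) (hd : 5 ≤ d) (p : ℕ) (hp : p.Prime)
    (a : Fin (d - 1) → ℕ) (ha0 : ∀ i, 0 < a i) (hamono : StrictMono a) (hap : ∀ i, a i < p)
    (b : Fin (d - 2) → ℕ) (hb0 : ∀ j, 0 < b j) (hbmono : StrictMono b) (hbp : ∀ j, b j < p) :
    ¬ ∃ M : Matrix (Fin 2) (Fin 2) ℚ, M.det ≠ 0 ∧ ∀ x y : ℚ,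
        x * ∏ i, (x - (a i : ℚ) * y) =
          ((M 0 0 * x + M 0 1 * y) - (p : ℚ) * (M 1 0 * x + M 1 1 * y)) *
            (M 0 0 * x + M 0 1 * y) *
            ∏ j, ((M 0 0 * x + M 0 1 * y) - (b j : ℚ) * (M 1 0 * x + M 1 1 * y)) := by
  rintro ⟨M, hdet, hM⟩
  set T := natRoots a
  set S := insert (p : ℚ) (natRoots b)
  have hTS : ∀ x y, splitForm T x y =
      splitForm S (M 0 0 * x + M 0 1 * y) (M 1 0 * x + M 1 1 * y) := by
    intro x y
    rw [splitForm_insert (natCast_notMem_natRoots hp.pos hbp), splitForm_natRoots hamono ha0,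
      splitForm_natRoots hbmono hb0, hM]
    ring
  have hcard : S.card ≤ T.card := by
    rw [card_insert_of_notMem (natCast_notMem_natRoots hp.pos hbp), card_natRoots hamono ha0,
      card_natRoots hbmono hb0]
    omega
  have hpre : ∀ s ∈ S, ∃ n < p, (n : ℚ) ∈ T ∧ mobius M n = s := by
    intro s hs
    obtain ⟨z, hz, rfl⟩ := mem_image.mp (image_mobius_eq_of_splitForm_eq hdet hcard hTS ▸ hs)
    obtain ⟨n, hn, rfl⟩ := exists_natCast_lt_of_mem_natRoots hp.pos hap hz
    exact ⟨n, hn, hz, rfl⟩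
  have hb_lt : b ⟨0, by omega⟩ < b ⟨1, by omega⟩ := hbmono (Fin.mk_lt_mk.mpr one_pos)
  obtain ⟨n₁, hn₁, hT₁, hφ₁⟩ := hpre p (by simp [S])
  obtain ⟨n₂, hn₂, hT₂, hφ₂⟩ := hpre 0 (by simp [S, natRoots])
  obtain ⟨n₃, hn₃, hT₃, hφ₃⟩ := hpre (b ⟨0, by omega⟩) (by simp [S, natRoots])
  obtain ⟨n₄, hn₄, hT₄, hφ₄⟩ := hpre (b ⟨1, by omega⟩) (by simp [S, natRoots])
  have hden {z : ℚ} (hz : z ∈ T) := denom_ne_zero_of_splitForm_eq hdet hTS hz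
  have hcross := mobius_cross_ratio (hden hT₁) (hden hT₂) (hden hT₃) (hden hT₄)
  rw [hφ₁, hφ₂, hφ₃, hφ₄, sub_zero, sub_zero] at hcross
  refine hp.cross_ratio_ne_of_lt (hb0 _) (hb0 _) (hbp _) (hbp _) hn₁ hn₂ hn₃ hn₄
    ?_ ?_ (by exact_mod_cast hcross)
  · rintro rfl
    exact hp.ne_zero (by exact_mod_cast hφ₁.symm.trans hφ₂)
  · rintro rfl
    exact hb_lt.ne (by exact_mod_cast hφ₃.symm.trans hφ₄)
end

section
/- For every integer d ≥ 5, every prime p with p ≥ d − 1, and all (x,y) ∈ ℤ² with L(x,y) ≠ 0, where L(X,Y) = (X − pY)·X·∏_{n=1}^{d−2}(X − nY), one has max{|x|, |y|} ≤ 9·|L(x,y)|^{1/(d−1)}. -/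
/-!
View `L` as `∏ (x - a y)` over the `m + 1` distinct integers `a ∈ {0, …, m - 1, p}`, where
`m = d - 1`, and put `M = max |x| |y|`. If `3 m |y| ≤ 2 |x|`, then `M = |x|`, every factor
with `a < m` is at least `|x| / 3`, and `|x - p y| ≥ 1`. Otherwise `M ≤ 3 m |y| / 2`. Ordering
the `a` by their distance to `x / y`, the `j`-th one is at distance at least `(j - 1) / 2`, so
bounding the nearest factor by `1` gives `|L| ≥ m! (|y| / 2) ^ m`, and `m ^ m ≤ 3 ^ m m!`
finishes the proof.
-/

open Finset
open scoped Nat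

theorem Nat.pow_self_le_three_pow_mul_factorial (n : ℕ) : n ^ n ≤ 3 ^ n * n ! := by
  have h := Real.pow_div_factorial_le_exp (n : ℝ) n.cast_nonneg n
  rw [div_le_iff₀ (by positivity), ← Real.exp_one_pow] at h
  have h3 : Real.exp 1 ^ n ≤ 3 ^ n :=
    pow_le_pow_left₀ (Real.exp_pos 1).le Real.exp_one_lt_three.le n
  exact_mod_cast h.trans (mul_le_mul_of_nonneg_right h3 (by positivity))

theorem Int.card_sub_one_le_max'_sub_min' (S : Finset ℤ) (hS : S.Nonempty) :
    (#S : ℤ) - 1 ≤ S.max' hS - S.min' hS := by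
  have h : #S ≤ #(Icc (S.min' hS) (S.max' hS)) :=
    card_le_card fun a ha ↦ mem_Icc.2 ⟨S.min'_le a ha, S.le_max' a ha⟩
  rw [Int.card_Icc] at h
  have := S.min'_le_max' hS
  omega

theorem Int.factorial_mul_abs_pow_le_two_pow_mul_prod_abs_sub (x y : ℤ) (S : Finset ℤ)
    (hS : ∀ a ∈ S, x - a * y ≠ 0) :
    ((#S - 1)! : ℤ) * |y| ^ (#S - 1) ≤ 2 ^ (#S - 1) * ∏ a ∈ S, |x - a * y| := by
  induction S using Finset.strongInduction with
  | H S ih =>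
  rcases S.eq_empty_or_nonempty with rfl | hne
  · simp
  obtain ⟨a, ha, hfar⟩ := S.exists_max_image (fun b ↦ |x - b * y|) hne
  have hspread : ((#S : ℤ) - 1) * |y| ≤ 2 * |x - a * y| := by
    have hmin := hfar _ (S.min'_mem hne)
    have hmax := hfar _ (S.max'_mem hne)
    calc ((#S : ℤ) - 1) * |y| ≤ (S.max' hne - S.min' hne) * |y| :=
          mul_le_mul_of_nonneg_right (card_sub_one_le_max'_sub_min' S hne) (abs_nonneg y)
      _ = |(x - S.min' hne * y) - (x - S.max' hne * y)| := by
          rw [← abs_of_nonneg (sub_nonneg.2 (S.min'_le_max' hne)), ← abs_mul]; ring_nf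
      _ ≤ 2 * |x - a * y| := by linarith [abs_sub (x - S.min' hne * y) (x - S.max' hne * y)]
  have IH := ih (S.erase a) (erase_ssubset ha) fun b hb ↦ hS b (mem_of_mem_erase hb)
  rw [card_erase_of_mem ha] at IH
  rw [← mul_prod_erase S _ ha]
  obtain ⟨n, hn⟩ : ∃ n, #S = n + 1 := ⟨#S - 1, by have := hne.card_pos; omega⟩
  rw [hn] at IH hspread ⊢
  cases n with
  | zero =>
    have : S.erase a = ∅ := card_eq_zero.1 (by rw [card_erase_of_mem ha, hn])
    simpa [this] using Int.one_le_abs (hS a ha)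
  | succ n =>
    simp only [Nat.add_sub_cancel] at IH ⊢
    push_cast at hspread
    calc ((n + 1)! : ℤ) * |y| ^ (n + 1) = ((n + 1) * |y|) * (n ! * |y| ^ n) := by
          push_cast [Nat.factorial_succ]; ring
      _ ≤ (2 * |x - a * y|) * (2 ^ n * ∏ b ∈ S.erase a, |x - b * y|) :=
          mul_le_mul (by linarith) IH (by positivity) (by positivity)
      _ = 2 ^ (n + 1) * (|x - a * y| * ∏ b ∈ S.erase a, |x - b * y|) := by ring

theorem Int.abs_le_three_mul_abs_sub_mul (x y : ℤ) {m n : ℕ} (hn : n < m)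
    (h : 3 * m * |y| ≤ 2 * |x|) : |x| ≤ 3 * |x - n * y| := by
  have hny : (n : ℤ) * |y| ≤ m * |y| :=
    mul_le_mul_of_nonneg_right (by exact_mod_cast hn.le) (abs_nonneg y)
  have := abs_sub_abs_le_abs_sub x (n * y)
  rw [abs_mul, Nat.abs_cast] at this
  linarith

theorem Finset.prod_insert_range_succ {M : Type*} [CommMonoid M] (f : ℕ → M) {k p : ℕ}
    (hkp : k < p) :
    ∏ n ∈ insert p (range (k + 1)), f n = f p * f 0 * ∏ n ∈ Icc 1 k, f n := by
  rw [prod_insert (by simpa using hkp), range_eq_Ico, prod_eq_prod_Ico_succ_bot (by omega),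
    Ico_add_one_right_eq_Icc, mul_assoc]

theorem Real.le_mul_rpow_inv_natCast_of_pow_le {a b c : ℝ} {n : ℕ} (hb : 0 ≤ b) (hc : 0 ≤ c)
    (hn : n ≠ 0) (h : a ^ n ≤ c ^ n * b) : a ≤ c * b ^ (n⁻¹ : ℝ) := by
  apply le_of_pow_le_pow_left₀ hn (by positivity)
  rwa [mul_pow, Real.rpow_inv_natCast_pow hb hn]

theorem max_abs_pow_le_of_three_mul_abs_le (x y : ℤ) {k p : ℕ} (hpy : x - p * y ≠ 0)
    (hx : 3 * ((k + 1 : ℕ) : ℤ) * |y| ≤ 2 * |x|) :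
    max |x| |y| ^ (k + 1) ≤
      9 ^ (k + 1) * (|x - p * y| * ∏ n ∈ range (k + 1), |x - n * y|) := by
  have hM : max |x| |y| = |x| := max_eq_left <| by
    push_cast at hx
    nlinarith [abs_nonneg y, mul_nonneg k.cast_nonneg (abs_nonneg y)]
  calc max |x| |y| ^ (k + 1) = ∏ _n ∈ range (k + 1), |x| := by simp [hM]
    _ ≤ ∏ n ∈ range (k + 1), 3 * |x - n * y| :=
        prod_le_prod (fun _ _ ↦ abs_nonneg x)
          fun n hn ↦ Int.abs_le_three_mul_abs_sub_mul x y (mem_range.1 hn) hx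
    _ = 3 ^ (k + 1) * ∏ n ∈ range (k + 1), |x - n * y| := by
        rw [prod_mul_distrib, prod_const, card_range]
    _ ≤ 9 ^ (k + 1) * (|x - p * y| * ∏ n ∈ range (k + 1), |x - n * y|) :=
        mul_le_mul (pow_le_pow_left₀ (by norm_num) (by norm_num) _)
          (le_mul_of_one_le_left (by positivity) (Int.one_le_abs hpy))
          (by positivity) (by positivity)

theorem max_abs_pow_le_of_two_mul_abs_lt (x y : ℤ) {k p : ℕ} (hkp : k < p)
    (hnz : ∀ n ∈ insert p (range (k + 1)), x - n * y ≠ 0)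
    (hy : 2 * |x| < 3 * ((k + 1 : ℕ) : ℤ) * |y|) :
    max |x| |y| ^ (k + 1) ≤
      9 ^ (k + 1) * (|x - p * y| * ∏ n ∈ range (k + 1), |x - n * y|) := by
  have hp : p ∉ range (k + 1) := by simpa using hkp
  have hM : 2 * max |x| |y| ≤ 3 * (k + 1) * |y| := by
    push_cast at hy
    rcases max_cases |x| |y| with ⟨h, -⟩ | ⟨h, -⟩ <;> rw [h] <;> nlinarith [abs_nonneg y]
  have hS := Int.factorial_mul_abs_pow_le_two_pow_mul_prod_abs_sub x y
    ((insert p (range (k + 1))).map Nat.castEmbedding) (by simpa using hnz)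
  simp only [card_map, prod_map, Nat.castEmbedding_apply] at hS
  rw [card_insert_of_notMem hp, card_range, Nat.add_sub_cancel, prod_insert hp] at hS
  have hfac : ((k : ℤ) + 1) ^ (k + 1) ≤ 3 ^ (k + 1) * (k + 1)! := by
    exact_mod_cast Nat.pow_self_le_three_pow_mul_factorial (k + 1)
  refine le_of_mul_le_mul_left ?_ (by positivity : (0 : ℤ) < 2 ^ (k + 1))
  calc 2 ^ (k + 1) * max |x| |y| ^ (k + 1) ≤ (3 * (k + 1) * |y|) ^ (k + 1) := by
        rw [← mul_pow]; exact pow_le_pow_left₀ (by positivity) hM _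
    _ = 3 ^ (k + 1) * ((k : ℤ) + 1) ^ (k + 1) * |y| ^ (k + 1) := by rw [mul_pow, mul_pow]
    _ ≤ 3 ^ (k + 1) * (3 ^ (k + 1) * (k + 1)!) * |y| ^ (k + 1) := by gcongr
    _ = 9 ^ (k + 1) * ((k + 1)! * |y| ^ (k + 1)) := by
        rw [show (9 : ℤ) = 3 * 3 by norm_num, mul_pow]; ring
    _ ≤ 9 ^ (k + 1) * (2 ^ (k + 1) * (|x - p * y| * ∏ n ∈ range (k + 1), |x - n * y|)) := by
        gcongr
    _ = 2 ^ (k + 1) * (9 ^ (k + 1) * (|x - p * y| * ∏ n ∈ range (k + 1), |x - n * y|)) := by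
        ring

theorem max_abs_pow_le_nine_pow_mul_abs_prod (x y : ℤ) {k p : ℕ} (hkp : k < p)
    (h : ∏ n ∈ insert p (range (k + 1)), (x - n * y) ≠ 0) :
    max |x| |y| ^ (k + 1) ≤ 9 ^ (k + 1) * |∏ n ∈ insert p (range (k + 1)), (x - n * y)| := by
  have hnz : ∀ n ∈ insert p (range (k + 1)), x - n * y ≠ 0 := prod_ne_zero_iff.1 h
  rw [abs_prod, prod_insert (by simpa using hkp)]
  rcases le_or_gt (3 * ((k + 1 : ℕ) : ℤ) * |y|) (2 * |x|) with hx | hy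
  · exact max_abs_pow_le_of_three_mul_abs_le x y (hnz p (mem_insert_self _ _)) hx
  · exact max_abs_pow_le_of_two_mul_abs_lt x y hkp hnz hy

theorem stmt_18_general (d : ℕ) (hd : 5 ≤ d) (p : ℕ) (hpd : d - 1 ≤ p)
    (x y : ℤ)
    (hL : (x - (p : ℤ) * y) * x * ∏ n ∈ Finset.Icc 1 (d - 2), (x - (n : ℤ) * y) ≠ 0) :
    ((max |x| |y| : ℤ) : ℝ) ≤
      9 * ((|(x - (p : ℤ) * y) * x * ∏ n ∈ Finset.Icc 1 (d - 2), (x - (n : ℤ) * y)| : ℤ) : ℝ) ^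
        ((1 : ℝ) / ((d : ℝ) - 1)) := by
  obtain ⟨k, rfl⟩ : ∃ k, d = k + 2 := ⟨d - 2, by omega⟩
  have hkp : k < p := by omega
  have hL_eq := prod_insert_range_succ (fun n : ℕ ↦ x - n * y) hkp
  simp only [Nat.add_sub_cancel, Nat.cast_zero, zero_mul, sub_zero] at hL hL_eq ⊢
  rw [← hL_eq] at hL ⊢
  have hexp : (1 : ℝ) / (((k + 2 : ℕ) : ℝ) - 1) = ((k + 1 : ℕ) : ℝ)⁻¹ := by
    push_cast; ring
  rw [hexp]
  refine Real.le_mul_rpow_inv_natCast_of_pow_le (by positivity) (by norm_num)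
    k.succ_ne_zero ?_
  exact_mod_cast max_abs_pow_le_nine_pow_mul_abs_prod x y hkp hL

/-- For d ≥ 5, a prime p ≥ d − 1, and (x,y) ∈ ℤ² with L(x,y) ≠ 0 where
L(X,Y) = (X − pY)·X·∏_{n=1}^{d−2}(X − nY), one has
max{|x|,|y|} ≤ 9·|L(x,y)|^{1/(d−1)}. -/
theorem stmt_18 (d : ℕ) (hd : 5 ≤ d) (p : ℕ) (hp : p.Prime) (hpd : d - 1 ≤ p)
    (x y : ℤ)
    (hL : (x - (p : ℤ) * y) * x * ∏ n ∈ Finset.Icc 1 (d - 2), (x - (n : ℤ) * y) ≠ 0) :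
    ((max |x| |y| : ℤ) : ℝ) ≤
      9 * ((|(x - (p : ℤ) * y) * x * ∏ n ∈ Finset.Icc 1 (d - 2), (x - (n : ℤ) * y)| : ℤ) : ℝ) ^
        ((1 : ℝ) / ((d : ℝ) - 1)) :=
  stmt_18_general d hd p hpd x y hL
end
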